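/- arXiv:2403.16773 — 4 statements merged into one kernel-verified Lean document; each statement's English description precedes it below -/
import Mathlib

section
/- The difference of expected mixed (ρ, β) second derivatives of the noisy- and true-covariate negative log-likelihoods at the true parameter is the explicit vector: E[∂²L*/∂ρ∂β (θ0)] − E[∂²L/∂ρ∂β (θ0)] = (0_{p1}ᵀ, λ² λx² tr(Ω0⁻² 𝕎S0) β02ᵀ)ᵀ ∈ ℝ^p. -/
/-!
Differentiating `L` along `β0 + t e_j` and then in `ρ`, with `u = X e_j`, `M = Ω0⁻¹` and
`dΩ⁻¹/dρ = λ² M 𝕎S0 M`, gives `∂²L/∂ρ∂β_j (θ0) = uᵀ (M W Y* − λ² M 𝕎S0 M (S0 Y* − X β0))`.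
Replacing `X` by `X* = X + Ξ` turns `u` into `u + Ξ P` and `X β0` into `X β0 + Ξ Q`, where `P`, `Q`
are the `X2`-blocks of `e_j` and `β0`. Both `W Y*` and `S0 Y* − X β0` are affine in `(E, ε)`, hence
uncorrelated with the centred `Ξ`, so only the term quadratic in `Ξ` survives in the expected
difference: `λ² E[(Ξ P)ᵀ K (Ξ Q)] = λ² λx² tr K · Pᵀ Q` with `K = M 𝕎S0 M`.
-/

open MeasureTheory ProbabilityTheory Matrix
open scoped Matrix

namespace PSAR

/-- `S(ρ) = I_N − ρ W`. -/
noncomputable def Smat {N : ℕ} (W : Matrix (Fin N) (Fin N) ℝ) (ρ : ℝ) :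
    Matrix (Fin N) (Fin N) ℝ :=
  1 - ρ • W

/-- `Ω(ρ, σ²) = σ² I_N + λ² S(ρ) S(ρ)ᵀ`. -/
noncomputable def Omat {N : ℕ} (W : Matrix (Fin N) (Fin N) ℝ) (lam2 ρ σ2 : ℝ) :
    Matrix (Fin N) (Fin N) ℝ :=
  σ2 • (1 : Matrix (Fin N) (Fin N) ℝ) + lam2 • (Smat W ρ * (Smat W ρ)ᵀ)

/-- `𝕎S(ρ) = W S(ρ)ᵀ + S(ρ) Wᵀ`. -/
noncomputable def WSmat {N : ℕ} (W : Matrix (Fin N) (Fin N) ℝ) (ρ : ℝ) :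
    Matrix (Fin N) (Fin N) ℝ :=
  W * (Smat W ρ)ᵀ + Smat W ρ * Wᵀ

/-- `𝕎(ρ) = Wᵀ S(ρ) + S(ρ)ᵀ W` (least squares version). -/
noncomputable def WLSmat {N : ℕ} (W : Matrix (Fin N) (Fin N) ℝ) (ρ : ℝ) :
    Matrix (Fin N) (Fin N) ℝ :=
  Wᵀ * Smat W ρ + (Smat W ρ)ᵀ * W

/-- The negative log-likelihood
`L(θ) = −log det S(ρ) + (1/2) log det Ω(ρ,σ²) + (1/2)(S(ρ)Ys − Xβ)ᵀ Ω(ρ,σ²)⁻¹ (S(ρ)Ys − Xβ)`. -/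
noncomputable def nll {N p1 p2 : ℕ} (W : Matrix (Fin N) (Fin N) ℝ) (lam2 : ℝ)
    (X : Matrix (Fin N) (Fin p1 ⊕ Fin p2) ℝ) (Ys : Fin N → ℝ)
    (ρ : ℝ) (β : Fin p1 ⊕ Fin p2 → ℝ) (σ2 : ℝ) : ℝ :=
  - Real.log (Smat W ρ).det + (1 / 2) * Real.log (Omat W lam2 ρ σ2).det
    + (1 / 2) * ((Smat W ρ *ᵥ Ys - X *ᵥ β) ⬝ᵥ
        ((Omat W lam2 ρ σ2)⁻¹ *ᵥ (Smat W ρ *ᵥ Ys - X *ᵥ β)))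

/-- Diagonal matrix `d(ρ)` with `d(ρ)_{ii} = 1/(S(ρ)ᵀ S(ρ))_{ii}`. -/
noncomputable def dmat {N : ℕ} (W : Matrix (Fin N) (Fin N) ℝ) (ρ : ℝ) :
    Matrix (Fin N) (Fin N) ℝ :=
  Matrix.diagonal fun i => ((((Smat W ρ)ᵀ * Smat W ρ) i i)⁻¹)

/-- Entrywise first derivative `ḋ(ρ)` of `d(ρ)` in `ρ`. -/
noncomputable def dmatDot {N : ℕ} (W : Matrix (Fin N) (Fin N) ℝ) (ρ : ℝ) :
    Matrix (Fin N) (Fin N) ℝ :=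
  Matrix.diagonal fun i => deriv (fun r => ((((Smat W r)ᵀ * Smat W r) i i)⁻¹)) ρ

/-- Entrywise second derivative `d̈(ρ)` of `d(ρ)` in `ρ`. -/
noncomputable def dmatDDot {N : ℕ} (W : Matrix (Fin N) (Fin N) ℝ) (ρ : ℝ) :
    Matrix (Fin N) (Fin N) ℝ :=
  Matrix.diagonal fun i => deriv (deriv (fun r => ((((Smat W r)ᵀ * Smat W r) i i)⁻¹))) ρ

/-- Least squares objective `L_LS(γ) = ‖d(ρ) S(ρ)ᵀ (S(ρ)Y − Xβ)‖²`. -/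
noncomputable def lsObj {N p1 p2 : ℕ} (W : Matrix (Fin N) (Fin N) ℝ)
    (X : Matrix (Fin N) (Fin p1 ⊕ Fin p2) ℝ) (Y : Fin N → ℝ)
    (ρ : ℝ) (β : Fin p1 ⊕ Fin p2 → ℝ) : ℝ :=
  ((dmat W ρ * (Smat W ρ)ᵀ) *ᵥ (Smat W ρ *ᵥ Y - X *ᵥ β)) ⬝ᵥ
    ((dmat W ρ * (Smat W ρ)ᵀ) *ᵥ (Smat W ρ *ᵥ Y - X *ᵥ β))

/-- Observed response `Y* = S0⁻¹(Xβ0 + E) + ε`. -/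
noncomputable def Yobs {N p1 p2 : ℕ} (W : Matrix (Fin N) (Fin N) ℝ) (ρ0 : ℝ)
    (X : Matrix (Fin N) (Fin p1 ⊕ Fin p2) ℝ) (β0 : Fin p1 ⊕ Fin p2 → ℝ)
    (E ε : Fin N → ℝ) : Fin N → ℝ :=
  (Smat W ρ0)⁻¹ *ᵥ (X *ᵥ β0 + E) + ε

/-- True response `Y = S0⁻¹(Xβ0 + E)`. -/
noncomputable def Ytrue {N p1 p2 : ℕ} (W : Matrix (Fin N) (Fin N) ℝ) (ρ0 : ℝ)
    (X : Matrix (Fin N) (Fin p1 ⊕ Fin p2) ℝ) (β0 : Fin p1 ⊕ Fin p2 → ℝ)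
    (E : Fin N → ℝ) : Fin N → ℝ :=
  (Smat W ρ0)⁻¹ *ᵥ (X *ᵥ β0 + E)

/-- Observed covariates `X* = (X1, X2 + Ex)`. -/
noncomputable def Xobs {N p1 p2 : ℕ} (X : Matrix (Fin N) (Fin p1 ⊕ Fin p2) ℝ)
    (Ex : Fin N → Fin p2 → ℝ) : Matrix (Fin N) (Fin p1 ⊕ Fin p2) ℝ :=
  X + Matrix.of fun i j => Sum.elim (fun _ => (0 : ℝ)) (fun k => Ex i k) j

/-- All the noise entries of `E`, `ε`, `Ex` gathered as a single family. -/
def noiseFam {Ωs : Type*} {N p2 : ℕ} (E ε : Ωs → Fin N → ℝ)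
    (Ex : Ωs → Fin N → Fin p2 → ℝ) :
    (Fin N ⊕ Fin N ⊕ Fin N × Fin p2) → Ωs → ℝ :=
  fun z ω => Sum.elim (fun i => E ω i) (Sum.elim (fun i => ε ω i) (fun q => Ex ω q.1 q.2)) z

section MatrixCalculus

/- Any norm would do: a normed-algebra structure is needed only for the derivative of
`Ring.inverse`, and this one induces the usual topology on matrices. -/
attribute [local instance] Matrix.linftyOpNormedRing Matrix.linftyOpNormedAlgebra

variable {n : Type*} [Fintype n] [DecidableEq n]

theorem hasDerivAt_dotProduct_mulVec {A : ℝ → Matrix n n ℝ} {A' : Matrix n n ℝ} {x : ℝ}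
    (hA : HasDerivAt A A' x) (u v : n → ℝ) :
    HasDerivAt (fun ρ => u ⬝ᵥ (A ρ *ᵥ v)) (u ⬝ᵥ (A' *ᵥ v)) x := by
  let L : Matrix n n ℝ →ₗ[ℝ] ℝ :=
    { toFun := fun B => u ⬝ᵥ (B *ᵥ v)
      map_add' := fun B C => by simp [Matrix.add_mulVec, dotProduct_add]
      map_smul' := fun c B => by simp [Matrix.smul_mulVec, dotProduct_smul] }
  exact (LinearMap.toContinuousLinearMap L).hasFDerivAt.comp_hasDerivAt x hA

theorem hasDerivAt_inv_of_isUnit_det {A : ℝ → Matrix n n ℝ} {A' : Matrix n n ℝ} {x : ℝ}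
    (hA : HasDerivAt A A' x) (hx : IsUnit (A x).det) :
    HasDerivAt (fun ρ => (A ρ)⁻¹) (-((A x)⁻¹ * A' * (A x)⁻¹)) x := by
  obtain ⟨U, hU⟩ := (Matrix.isUnit_iff_isUnit_det _).2 hx
  have hinv : HasFDerivAt Ring.inverse
      (-ContinuousLinearMap.mulLeftRight ℝ _ (A x)⁻¹ (A x)⁻¹) (A x) := by
    rw [← hU, Matrix.nonsing_inv_eq_ringInverse, Ring.inverse_unit]
    exact hasFDerivAt_ringInverse U
  have h := hinv.comp_hasDerivAt x hA
  simp only [Matrix.nonsing_inv_eq_ringInverse] at h ⊢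
  exact h

variable {N : ℕ} (W : Matrix (Fin N) (Fin N) ℝ)

theorem hasDerivAt_Smat (ρ : ℝ) : HasDerivAt (Smat W) (-W) ρ := by
  have h := ((hasDerivAt_id ρ).smul_const W).const_sub (1 : Matrix (Fin N) (Fin N) ℝ)
  simp only [id_eq, one_smul] at h
  exact h

theorem Smat_transpose (ρ : ℝ) : (Smat W ρ)ᵀ = Smat Wᵀ ρ := by
  simp [Smat, Matrix.transpose_sub]

theorem hasDerivAt_Omat (lam2 σ2 ρ : ℝ) :
    HasDerivAt (fun r => Omat W lam2 r σ2) (-(lam2 • WSmat W ρ)) ρ := by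
  have h := (((hasDerivAt_Smat W ρ).mul (hasDerivAt_Smat Wᵀ ρ)).const_smul lam2).const_add
    (σ2 • (1 : Matrix (Fin N) (Fin N) ℝ))
  have hW : lam2 • (-W * Smat Wᵀ ρ + Smat W ρ * -Wᵀ) = -(lam2 • WSmat W ρ) := by
    rw [WSmat, Smat_transpose, Matrix.neg_mul, Matrix.mul_neg, ← neg_add, smul_neg]
  simp only [Omat, Smat_transpose]
  rw [hW] at h
  exact h

theorem hasDerivAt_dotProduct_Omat_inv_mulVec (lam2 σ2 ρ : ℝ)
    (hΩ : IsUnit (Omat W lam2 ρ σ2).det) (u Ys c : Fin N → ℝ) :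
    HasDerivAt (fun r => u ⬝ᵥ ((Omat W lam2 r σ2)⁻¹ *ᵥ (Smat W r *ᵥ Ys - c)))
      (u ⬝ᵥ (lam2 • (((Omat W lam2 ρ σ2)⁻¹ * WSmat W ρ * (Omat W lam2 ρ σ2)⁻¹) *ᵥ
          (Smat W ρ *ᵥ Ys - c)) - (Omat W lam2 ρ σ2)⁻¹ *ᵥ (W *ᵥ Ys))) ρ := by
  have hinv := hasDerivAt_inv_of_isUnit_det (hasDerivAt_Omat W lam2 σ2 ρ) hΩ
  have h := (hasDerivAt_dotProduct_mulVec (hinv.fun_mul (hasDerivAt_Smat W ρ)) u Ys).fun_sub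
    (hasDerivAt_dotProduct_mulVec hinv u c)
  refine (h.congr_deriv ?_).congr_of_eventuallyEq (Filter.Eventually.of_forall fun r => ?_)
  · simp only [Matrix.add_mulVec, Matrix.neg_mulVec, Matrix.smul_mulVec, ← Matrix.mulVec_mulVec,
      Matrix.mulVec_neg, Matrix.mulVec_smul, Matrix.mulVec_sub, dotProduct_add, dotProduct_sub,
      dotProduct_neg, dotProduct_smul, smul_eq_mul]
    ring
  · simp only [Matrix.mulVec_sub, Matrix.mulVec_mulVec, dotProduct_sub]

end MatrixCalculus

theorem hasDerivAt_dotProduct_mulVec_self {n : Type*} [Fintype n] {M : Matrix n n ℝ}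
    (hM : M.IsSymm) (r u : n → ℝ) (t : ℝ) :
    HasDerivAt (fun s : ℝ => (r + s • u) ⬝ᵥ (M *ᵥ (r + s • u)))
      (2 * (u ⬝ᵥ (M *ᵥ (r + t • u)))) t := by
  have hsymm : r ⬝ᵥ (M *ᵥ u) = u ⬝ᵥ (M *ᵥ r) := by
    rw [Matrix.dotProduct_mulVec, ← Matrix.mulVec_transpose, hM.eq, dotProduct_comm]
  have h := ((hasDerivAt_id t).const_mul (2 * (u ⬝ᵥ (M *ᵥ r)))).fun_add
    ((hasDerivAt_pow 2 t).const_mul (u ⬝ᵥ (M *ᵥ u)))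
  refine (h.const_add (r ⬝ᵥ (M *ᵥ r))).congr_deriv ?_ |>.congr_of_eventuallyEq
    (Filter.Eventually.of_forall fun s => ?_)
  · simp only [Matrix.mulVec_add, Matrix.mulVec_smul, dotProduct_add, dotProduct_smul,
      smul_eq_mul]
    ring
  · simp only [Matrix.mulVec_add, Matrix.mulVec_smul, add_dotProduct, dotProduct_add,
      smul_dotProduct, dotProduct_smul, smul_eq_mul, hsymm, id_eq]
    ring

section Likelihood

variable {N p1 p2 : ℕ} (W : Matrix (Fin N) (Fin N) ℝ)

theorem Omat_isSymm (lam2 ρ σ2 : ℝ) : (Omat W lam2 ρ σ2).IsSymm := by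
  simp [Matrix.IsSymm, Omat, Matrix.transpose_add, Matrix.transpose_smul, Matrix.transpose_mul]

theorem deriv_nll_add_smul (lam2 σ2 : ℝ) (X' : Matrix (Fin N) (Fin p1 ⊕ Fin p2) ℝ)
    (Ys : Fin N → ℝ) (ρ : ℝ) (b v : Fin p1 ⊕ Fin p2 → ℝ) :
    deriv (fun t : ℝ => nll W lam2 X' Ys ρ (b + t • v) σ2) 0
      = -((X' *ᵥ v) ⬝ᵥ ((Omat W lam2 ρ σ2)⁻¹ *ᵥ (Smat W ρ *ᵥ Ys - X' *ᵥ b))) := by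
  have hM : ((Omat W lam2 ρ σ2)⁻¹).IsSymm := by
    rw [Matrix.IsSymm, Matrix.transpose_nonsing_inv, (Omat_isSymm W lam2 ρ σ2).eq]
  have h := ((hasDerivAt_dotProduct_mulVec_self hM (Smat W ρ *ᵥ Ys - X' *ᵥ b) (-(X' *ᵥ v)) 0
    ).const_mul (1 / 2 : ℝ)).const_add
      (-Real.log (Smat W ρ).det + 1 / 2 * Real.log (Omat W lam2 ρ σ2).det)
  have hres : ∀ t : ℝ, Smat W ρ *ᵥ Ys - X' *ᵥ (b + t • v)
      = Smat W ρ *ᵥ Ys - X' *ᵥ b + t • -(X' *ᵥ v) := fun t => by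
    rw [Matrix.mulVec_add, Matrix.mulVec_smul, smul_neg]; abel
  simp only [nll, hres]
  rw [h.deriv]
  simp only [zero_smul, add_zero, neg_dotProduct]
  ring

theorem deriv_deriv_nll_add_smul (lam2 σ2 : ℝ) (X' : Matrix (Fin N) (Fin p1 ⊕ Fin p2) ℝ)
    (Ys : Fin N → ℝ) (ρ : ℝ) (hΩ : IsUnit (Omat W lam2 ρ σ2).det) (b v : Fin p1 ⊕ Fin p2 → ℝ) :
    deriv (fun r => deriv (fun t : ℝ => nll W lam2 X' Ys r (b + t • v) σ2) 0) ρ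
      = (X' *ᵥ v) ⬝ᵥ ((Omat W lam2 ρ σ2)⁻¹ *ᵥ (W *ᵥ Ys) - lam2 •
          (((Omat W lam2 ρ σ2)⁻¹ * WSmat W ρ * (Omat W lam2 ρ σ2)⁻¹) *ᵥ
            (Smat W ρ *ᵥ Ys - X' *ᵥ b))) := by
  simp only [deriv_nll_add_smul]
  rw [(hasDerivAt_dotProduct_Omat_inv_mulVec W lam2 σ2 ρ hΩ _ Ys _).fun_neg.deriv,
    ← dotProduct_neg, neg_sub]

theorem Omat_posDef {lam2 σ2 : ℝ} (hσ : 0 < σ2) (hlam : 0 < lam2) (ρ : ℝ) :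
    (Omat W lam2 ρ σ2).PosDef := by
  have hSS := Matrix.posSemidef_self_mul_conjTranspose (Smat W ρ)
  rw [Matrix.conjTranspose_eq_transpose_of_trivial] at hSS
  exact (Matrix.PosDef.one.smul hσ).add_posSemidef (hSS.smul hlam.le)

end Likelihood

section Moments

variable {Ω : Type*} [MeasurableSpace Ω] {μ : Measure Ω} {n m : Type*} [Fintype m]

theorem dotProduct_mulVec_eq_sum [Fintype n] (u : n → ℝ) (C : Matrix n m ℝ) (v : m → ℝ) :
    u ⬝ᵥ (C *ᵥ v) = ∑ i, ∑ k, C i k * (u i * v k) := by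
  simp only [dotProduct, Matrix.mulVec, Finset.mul_sum]
  exact Finset.sum_congr rfl fun i _ => Finset.sum_congr rfl fun k _ => by ring

theorem memLp_const_mulVec_apply {V : Ω → m → ℝ} (hV : ∀ k, MemLp (fun ω => V ω k) 2 μ)
    (C : Matrix n m ℝ) (i : n) : MemLp (fun ω => (C *ᵥ V ω) i) 2 μ := by
  simpa only [Matrix.mulVec, dotProduct] using
    memLp_finsetSum Finset.univ fun k _ => (hV k).const_mul (C i k)

theorem memLp_mulVec_const_apply {Ξ : Ω → Matrix n m ℝ}
    (hΞ : ∀ i k, MemLp (fun ω => Ξ ω i k) 2 μ) (P : m → ℝ) (i : n) :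
    MemLp (fun ω => (Ξ ω *ᵥ P) i) 2 μ := by
  simpa only [Matrix.mulVec, dotProduct] using
    memLp_finsetSum Finset.univ fun k _ => (hΞ i k).mul_const (P k)

theorem integral_mul_mulVec_apply {Z : Ω → ℝ} (hZ : MemLp Z 2 μ) {V : Ω → m → ℝ}
    (hV : ∀ k, MemLp (fun ω => V ω k) 2 μ) (A : Matrix n m ℝ) (l : n) :
    ∫ ω, Z ω * (A *ᵥ V ω) l ∂μ = ∑ k, A l k * ∫ ω, Z ω * V ω k ∂μ := by
  simp only [Matrix.mulVec, dotProduct, Finset.mul_sum]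
  rw [integral_finsetSum _ (f := fun k ω => Z ω * (A l k * V ω k))
    fun k _ => ((hZ.integrable_mul (hV k)).const_mul (A l k)).congr
      (Filter.Eventually.of_forall fun ω => by simp only [Pi.mul_apply]; ring)]
  refine Finset.sum_congr rfl fun k _ => ?_
  rw [← integral_const_mul]
  exact integral_congr_ae (Filter.Eventually.of_forall fun ω => by ring)

variable [Fintype n]

theorem integrable_dotProduct {U V : Ω → n → ℝ} (hU : ∀ i, MemLp (fun ω => U ω i) 2 μ)
    (hV : ∀ i, MemLp (fun ω => V ω i) 2 μ) : Integrable (fun ω => U ω ⬝ᵥ V ω) μ :=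
  integrable_finsetSum _ fun i _ => (hU i).integrable_mul (hV i)

theorem integral_dotProduct_mulVec {U : Ω → n → ℝ} {V : Ω → m → ℝ}
    (hU : ∀ i, MemLp (fun ω => U ω i) 2 μ) (hV : ∀ k, MemLp (fun ω => V ω k) 2 μ)
    (C : Matrix n m ℝ) :
    ∫ ω, U ω ⬝ᵥ (C *ᵥ V ω) ∂μ = ∑ i, ∑ k, C i k * ∫ ω, U ω i * V ω k ∂μ := by
  simp only [dotProduct_mulVec_eq_sum]
  rw [integral_finsetSum _ (f := fun i ω => ∑ k, C i k * (U ω i * V ω k))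
    fun i _ => integrable_finsetSum _ fun k _ => ((hU i).integrable_mul (hV k)).const_mul _]
  refine Finset.sum_congr rfl fun i _ => ?_
  rw [integral_finsetSum _ (f := fun k ω => C i k * (U ω i * V ω k))
    fun k _ => ((hU i).integrable_mul (hV k)).const_mul _]
  exact Finset.sum_congr rfl fun k _ => integral_const_mul _ _

theorem integral_dotProduct_mulVec_eq_zero {U : Ω → n → ℝ} {V : Ω → m → ℝ}
    (hU : ∀ i, MemLp (fun ω => U ω i) 2 μ) (hV : ∀ k, MemLp (fun ω => V ω k) 2 μ)
    (hUV : ∀ i k, ∫ ω, U ω i * V ω k ∂μ = 0) (C : Matrix n m ℝ) :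
    ∫ ω, U ω ⬝ᵥ (C *ᵥ V ω) ∂μ = 0 := by
  simp [integral_dotProduct_mulVec hU hV, hUV]

variable {Ξ : Ω → Matrix n m ℝ} (hΞ : ∀ i k, MemLp (fun ω => Ξ ω i k) 2 μ)
include hΞ

omit [Fintype n] in
theorem integral_mulVec_apply_mul {Z : Ω → ℝ} (hZ : MemLp Z 2 μ) (P : m → ℝ) (i : n) :
    ∫ ω, (Ξ ω *ᵥ P) i * Z ω ∂μ = ∑ k, P k * ∫ ω, Ξ ω i k * Z ω ∂μ := by
  simp only [Matrix.mulVec, dotProduct, Finset.sum_mul]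
  rw [integral_finsetSum _ (f := fun k ω => Ξ ω i k * P k * Z ω)
    fun k _ => (((hΞ i k).integrable_mul hZ).const_mul (P k)).congr
      (Filter.Eventually.of_forall fun ω => by simp only [Pi.mul_apply]; ring)]
  refine Finset.sum_congr rfl fun k _ => ?_
  rw [← integral_const_mul]
  exact integral_congr_ae (Filter.Eventually.of_forall fun ω => by ring)

variable [DecidableEq n] [DecidableEq m] {lamx2 : ℝ}
  (hΞcov : ∀ i k i' k', ∫ ω, Ξ ω i k * Ξ ω i' k' ∂μ = if i = i' ∧ k = k' then lamx2 else 0)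
include hΞcov

omit [Fintype n] in
theorem integral_mulVec_apply_mul_mulVec_apply (P Q : m → ℝ) (i k : n) :
    ∫ ω, (Ξ ω *ᵥ P) i * (Ξ ω *ᵥ Q) k ∂μ = if i = k then lamx2 * (P ⬝ᵥ Q) else 0 := by
  have h : ∀ k', ∫ ω, Ξ ω i k' * (Ξ ω *ᵥ Q) k ∂μ = if i = k then lamx2 * Q k' else 0 := by
    intro k'
    simp_rw [mul_comm (Ξ _ i k')]
    rw [integral_mulVec_apply_mul hΞ (hΞ i k')]
    split_ifs with hik <;> simp [hΞcov, hik, mul_comm]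
  rw [integral_mulVec_apply_mul hΞ (memLp_mulVec_const_apply hΞ Q k)]
  simp only [h]
  split_ifs <;> simp [dotProduct, Finset.mul_sum, mul_left_comm]

theorem integral_mulVec_dotProduct_mulVec (K : Matrix n n ℝ) (P Q : m → ℝ) :
    ∫ ω, (Ξ ω *ᵥ P) ⬝ᵥ (K *ᵥ (Ξ ω *ᵥ Q)) ∂μ = lamx2 * K.trace * (P ⬝ᵥ Q) := by
  rw [integral_dotProduct_mulVec (memLp_mulVec_const_apply hΞ P)
    (memLp_mulVec_const_apply hΞ Q)]
  simp only [integral_mulVec_apply_mul_mulVec_apply hΞ hΞcov, mul_ite, mul_zero,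
    Finset.sum_ite_eq, Finset.mem_univ, if_true, Matrix.trace, Matrix.diag_apply, Finset.mul_sum,
    Finset.sum_mul]
  exact Finset.sum_congr rfl fun _ _ => by ring

theorem integral_errorsInVariables_sub [IsFiniteMeasure μ] (hΞmean : ∀ i k, ∫ ω, Ξ ω i k ∂μ = 0)
    {y r : Ω → n → ℝ} (hy : ∀ l, MemLp (fun ω => y ω l) 2 μ)
    (hr : ∀ l, MemLp (fun ω => r ω l) 2 μ)
    (hΞy : ∀ i k l, ∫ ω, Ξ ω i k * y ω l ∂μ = 0) (hΞr : ∀ i k l, ∫ ω, Ξ ω i k * r ω l ∂μ = 0)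
    (u : n → ℝ) (K : Matrix n n ℝ) (c : ℝ) (P Q : m → ℝ) :
    ∫ ω, (u + Ξ ω *ᵥ P) ⬝ᵥ (y ω - c • (K *ᵥ (r ω - Ξ ω *ᵥ Q))) ∂μ
      - ∫ ω, u ⬝ᵥ (y ω - c • (K *ᵥ r ω)) ∂μ = c * lamx2 * K.trace * (P ⬝ᵥ Q) := by
  have hu : ∀ i, MemLp (fun _ : Ω => u i) 2 μ := fun i => memLp_const (u i)
  have hP := memLp_mulVec_const_apply hΞ P
  have hQ := memLp_mulVec_const_apply hΞ Q
  have hPy : ∫ ω, (Ξ ω *ᵥ P) ⬝ᵥ y ω ∂μ = 0 := by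
    simpa using integral_dotProduct_mulVec_eq_zero hP hy
      (fun i l => by simp [integral_mulVec_apply_mul hΞ (hy l), hΞy]) 1
  have hPr : ∫ ω, (Ξ ω *ᵥ P) ⬝ᵥ (K *ᵥ r ω) ∂μ = 0 :=
    integral_dotProduct_mulVec_eq_zero hP hr
      (fun i l => by simp [integral_mulVec_apply_mul hΞ (hr l), hΞr]) K
  have huQ : ∫ ω, u ⬝ᵥ (K *ᵥ (Ξ ω *ᵥ Q)) ∂μ = 0 :=
    integral_dotProduct_mulVec_eq_zero hu hQ (fun i k => by
      simp_rw [mul_comm (u i)]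
      simp [integral_mulVec_apply_mul hΞ (memLp_const (u i)), integral_mul_const, hΞmean]) K
  have hdiff : ∀ ω, (u + Ξ ω *ᵥ P) ⬝ᵥ (y ω - c • (K *ᵥ (r ω - Ξ ω *ᵥ Q)))
      - u ⬝ᵥ (y ω - c • (K *ᵥ r ω))
      = (Ξ ω *ᵥ P) ⬝ᵥ y ω + c * (u ⬝ᵥ (K *ᵥ (Ξ ω *ᵥ Q)))
        - c * ((Ξ ω *ᵥ P) ⬝ᵥ (K *ᵥ r ω)) + c * ((Ξ ω *ᵥ P) ⬝ᵥ (K *ᵥ (Ξ ω *ᵥ Q))) := fun ω => by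
    simp only [Matrix.mulVec_sub, add_dotProduct, dotProduct_sub, dotProduct_smul, smul_eq_mul]
    ring
  have i1 := integrable_dotProduct hP hy
  have i2 := (integrable_dotProduct hu (memLp_const_mulVec_apply hQ K)).const_mul c
  have i3 := (integrable_dotProduct hP (memLp_const_mulVec_apply hr K)).const_mul c
  have i4 := (integrable_dotProduct hP (memLp_const_mulVec_apply hQ K)).const_mul c
  have hKrQ : ∀ l, MemLp (fun ω => (y ω - c • (K *ᵥ (r ω - Ξ ω *ᵥ Q))) l) 2 μ := fun l =>
    (hy l).sub ((memLp_const_mulVec_apply (fun l => (hr l).sub (hQ l)) K l).const_mul c)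
  have hKr : ∀ l, MemLp (fun ω => (y ω - c • (K *ᵥ r ω)) l) 2 μ := fun l =>
    (hy l).sub ((memLp_const_mulVec_apply hr K l).const_mul c)
  rw [← integral_sub (integrable_dotProduct (U := fun ω => u + Ξ ω *ᵥ P)
      (fun i => (hu i).add (hP i)) hKrQ) (integrable_dotProduct hu hKr),
    integral_congr_ae (Filter.Eventually.of_forall hdiff),
    integral_add ((i1.fun_add i2).sub' i3) i4, integral_sub (i1.fun_add i2) i3,
    integral_add i1 i2, integral_const_mul, integral_const_mul, integral_const_mul, hPy, hPr, huQ,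
    integral_mulVec_dotProduct_mulVec hΞ hΞcov]
  ring

end Moments

theorem integral_mul_eq_zero_of_iIndepFun {Ω ι : Type*} [MeasurableSpace Ω] {μ : Measure Ω}
    {ξ : ι → Ω → ℝ} (hindep : iIndepFun ξ μ) (hmeas : ∀ z, AEStronglyMeasurable (ξ z) μ)
    (hmean : ∀ z, ∫ ω, ξ z ω ∂μ = 0) {z z' : ι} (h : z ≠ z') :
    ∫ ω, ξ z ω * ξ z' ω ∂μ = 0 := by
  rw [(hindep.indepFun h).integral_fun_mul_eq_mul_integral (hmeas z) (hmeas z'), hmean z,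
    zero_mul]

theorem Xobs_mulVec {N p1 p2 : ℕ} (X : Matrix (Fin N) (Fin p1 ⊕ Fin p2) ℝ)
    (Ex : Fin N → Fin p2 → ℝ) (v : Fin p1 ⊕ Fin p2 → ℝ) :
    Xobs X Ex *ᵥ v = X *ᵥ v + Matrix.of Ex *ᵥ fun k => v (Sum.inr k) := by
  ext i
  simp [Xobs, Matrix.mulVec, dotProduct, Fintype.sum_sum_type, add_mul, Finset.sum_add_distrib,
    add_assoc]

theorem mulVec_Yobs {N p1 p2 : ℕ} (W : Matrix (Fin N) (Fin N) ℝ) (ρ0 : ℝ)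
    (X : Matrix (Fin N) (Fin p1 ⊕ Fin p2) ℝ) (β0 : Fin p1 ⊕ Fin p2 → ℝ) (e η : Fin N → ℝ)
    (C : Matrix (Fin N) (Fin N) ℝ) :
    C *ᵥ Yobs W ρ0 X β0 e η
      = C *ᵥ ((Smat W ρ0)⁻¹ *ᵥ (X *ᵥ β0)) + (C * (Smat W ρ0)⁻¹) *ᵥ e + C *ᵥ η := by
  simp only [Yobs, Matrix.mulVec_add, Matrix.mulVec_mulVec]

section NoiseModel

variable {Ω : Type*} [MeasurableSpace Ω] {μ : Measure Ω} {N p2 : ℕ}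
  {E ε : Ω → Fin N → ℝ} {Ex : Ω → Fin N → Fin p2 → ℝ}
  (hindep : iIndepFun (noiseFam E ε Ex) μ) (hmom : ∀ z, MemLp (noiseFam E ε Ex z) 4 μ)
  (hmean : ∀ z, ∫ ω, noiseFam E ε Ex z ω ∂μ = 0)

include hmom in
theorem memLp_two_noiseFam [IsFiniteMeasure μ] (z : Fin N ⊕ Fin N ⊕ Fin N × Fin p2) :
    MemLp (noiseFam E ε Ex z) 2 μ :=
  (hmom z).mono_exponent (by norm_num)

include hindep hmom hmean in
theorem integral_noiseFam_mul_of_ne {z z' : Fin N ⊕ Fin N ⊕ Fin N × Fin p2} (h : z ≠ z') :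
    ∫ ω, noiseFam E ε Ex z ω * noiseFam E ε Ex z' ω ∂μ = 0 :=
  integral_mul_eq_zero_of_iIndepFun hindep (fun z => (hmom z).aestronglyMeasurable) hmean h

include hindep hmom hmean in
theorem integral_Ex_mul_Ex {lamx2 : ℝ} (hExvar : ∀ i k, ∫ ω, (Ex ω i k) ^ 2 ∂μ = lamx2)
    (i : Fin N) (k : Fin p2) (i' : Fin N) (k' : Fin p2) :
    ∫ ω, Ex ω i k * Ex ω i' k' ∂μ = if i = i' ∧ k = k' then lamx2 else 0 := by
  split_ifs with h
  · obtain ⟨rfl, rfl⟩ := h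
    simp_rw [← sq, hExvar]
  · refine integral_noiseFam_mul_of_ne hindep hmom hmean
      (z := Sum.inr (Sum.inr (i, k))) (z' := Sum.inr (Sum.inr (i', k'))) ?_
    simpa using h

include hmom in
theorem memLp_of_affine [IsFiniteMeasure μ] {Z : Ω → Fin N → ℝ} {d : Fin N → ℝ}
    {A B : Matrix (Fin N) (Fin N) ℝ}
    (hZ : ∀ ω, Z ω = d + A *ᵥ E ω + B *ᵥ ε ω) (l : Fin N) : MemLp (fun ω => Z ω l) 2 μ := by
  simp only [hZ, Pi.add_apply]
  exact ((memLp_const (d l)).add (memLp_const_mulVec_apply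
    (fun j => memLp_two_noiseFam hmom (Sum.inl j)) A l)).add
    (memLp_const_mulVec_apply (fun j => memLp_two_noiseFam hmom (Sum.inr (Sum.inl j))) B l)

include hindep hmom hmean in
theorem integral_Ex_mul_of_affine [IsFiniteMeasure μ] {Z : Ω → Fin N → ℝ} {d : Fin N → ℝ}
    {A B : Matrix (Fin N) (Fin N) ℝ} (hZ : ∀ ω, Z ω = d + A *ᵥ E ω + B *ᵥ ε ω)
    (i : Fin N) (k : Fin p2) (l : Fin N) : ∫ ω, Ex ω i k * Z ω l ∂μ = 0 := by
  have hEx : MemLp (fun ω => Ex ω i k) 2 μ := memLp_two_noiseFam hmom (Sum.inr (Sum.inr (i, k)))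
  have hE : ∀ j, MemLp (fun ω => E ω j) 2 μ := fun j => memLp_two_noiseFam hmom (Sum.inl j)
  have hε : ∀ j, MemLp (fun ω => ε ω j) 2 μ := fun j =>
    memLp_two_noiseFam hmom (Sum.inr (Sum.inl j))
  have hExE : ∀ j, ∫ ω, Ex ω i k * E ω j ∂μ = 0 := fun j =>
    integral_noiseFam_mul_of_ne hindep hmom hmean
      (z := Sum.inr (Sum.inr (i, k))) (z' := Sum.inl j) (by simp)
  have hExε : ∀ j, ∫ ω, Ex ω i k * ε ω j ∂μ = 0 := fun j =>
    integral_noiseFam_mul_of_ne hindep hmom hmean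
      (z := Sum.inr (Sum.inr (i, k))) (z' := Sum.inr (Sum.inl j)) (by simp)
  have i0 : Integrable (fun ω => Ex ω i k * d l) μ := (hEx.integrable one_le_two).mul_const _
  have i1 : Integrable (fun ω => Ex ω i k * (A *ᵥ E ω) l) μ :=
    hEx.integrable_mul (memLp_const_mulVec_apply hE A l)
  have i2 : Integrable (fun ω => Ex ω i k * (B *ᵥ ε ω) l) μ :=
    hEx.integrable_mul (memLp_const_mulVec_apply hε B l)
  simp only [hZ, Pi.add_apply, mul_add]
  rw [integral_add (i0.fun_add i1) i2, integral_add i0 i1,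
    integral_mul_const, integral_mul_mulVec_apply hEx hE, integral_mul_mulVec_apply hEx hε]
  have hExmean : ∫ ω, Ex ω i k ∂μ = 0 := hmean (Sum.inr (Sum.inr (i, k)))
  simp [hExE, hExε, hExmean]

end NoiseModel

theorem statement_7_general
    {Ωs : Type*} [MeasurableSpace Ωs] (μ : Measure Ωs) [IsProbabilityMeasure μ]
    (N p1 p2 : ℕ)
    (W : Matrix (Fin N) (Fin N) ℝ)
    (X : Matrix (Fin N) (Fin p1 ⊕ Fin p2) ℝ)
    (ρ0 : ℝ) (β0 : Fin p1 ⊕ Fin p2 → ℝ) (σ02 lam2 lamx2 : ℝ)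
    (hσ : 0 < σ02) (hlam : 0 < lam2)
    (E ε : Ωs → Fin N → ℝ) (Ex : Ωs → Fin N → Fin p2 → ℝ)
    (hindep : iIndepFun (noiseFam E ε Ex) μ)
    (hmom : ∀ z, MemLp (noiseFam E ε Ex z) 4 μ)
    (hmean : ∀ z, ∫ ω, noiseFam E ε Ex z ω ∂μ = 0)
    (hExvar : ∀ i j, ∫ ω, (Ex ω i j) ^ 2 ∂μ = lamx2) :
    ∀ j : Fin p1 ⊕ Fin p2,
      (∫ ω, deriv (fun ρ => deriv (fun t : ℝ =>
            nll W lam2 (Xobs X (Ex ω)) (Yobs W ρ0 X β0 (E ω) (ε ω)) ρ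
              (β0 + t • (Pi.single j 1 : (Fin p1 ⊕ Fin p2) → ℝ)) σ02) 0) ρ0 ∂μ)
        - (∫ ω, deriv (fun ρ => deriv (fun t : ℝ =>
            nll W lam2 X (Yobs W ρ0 X β0 (E ω) (ε ω)) ρ
              (β0 + t • (Pi.single j 1 : (Fin p1 ⊕ Fin p2) → ℝ)) σ02) 0) ρ0 ∂μ)
        = Sum.elim (fun _ => (0 : ℝ))
            (fun k => lam2 * lamx2 *
              Matrix.trace ((Omat W lam2 ρ0 σ02)⁻¹ * (Omat W lam2 ρ0 σ02)⁻¹ * WSmat W ρ0) *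
              β0 (Sum.inr k)) j
  := by
  intro j
  set M := (Omat W lam2 ρ0 σ02)⁻¹
  have hΩ : IsUnit (Omat W lam2 ρ0 σ02).det :=
    (Omat_posDef W hσ hlam ρ0).det_pos.ne'.isUnit
  have hy : ∀ ω, M *ᵥ (W *ᵥ Yobs W ρ0 X β0 (E ω) (ε ω)) = (M * W) *ᵥ ((Smat W ρ0)⁻¹ *ᵥ (X *ᵥ β0))
      + (M * W * (Smat W ρ0)⁻¹) *ᵥ E ω + (M * W) *ᵥ ε ω := fun ω => by
    rw [Matrix.mulVec_mulVec, mulVec_Yobs]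
  have hr : ∀ ω, Smat W ρ0 *ᵥ Yobs W ρ0 X β0 (E ω) (ε ω) - X *ᵥ β0
      = (Smat W ρ0 *ᵥ ((Smat W ρ0)⁻¹ *ᵥ (X *ᵥ β0)) - X *ᵥ β0)
        + (Smat W ρ0 * (Smat W ρ0)⁻¹) *ᵥ E ω + Smat W ρ0 *ᵥ ε ω := fun ω => by
    rw [mulVec_Yobs]; abel
  simp only [deriv_deriv_nll_add_smul W lam2 σ02 _ _ ρ0 hΩ, Xobs_mulVec, ← sub_sub]
  rw [integral_errorsInVariables_sub (Ξ := fun ω => Matrix.of (Ex ω))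
    (fun i k => memLp_two_noiseFam hmom (Sum.inr (Sum.inr (i, k))))
    (integral_Ex_mul_Ex hindep hmom hmean hExvar)
    (fun i k => hmean (Sum.inr (Sum.inr (i, k))))
    (memLp_of_affine hmom hy) (memLp_of_affine hmom hr)
    (integral_Ex_mul_of_affine hindep hmom hmean hy)
    (integral_Ex_mul_of_affine hindep hmom hmean hr), Matrix.trace_mul_comm, ← Matrix.mul_assoc]
  cases j <;> simp [dotProduct, Pi.single_apply, M]

theorem statement_7
    {Ωs : Type*} [MeasurableSpace Ωs] (μ : Measure Ωs) [IsProbabilityMeasure μ]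
    (N p1 p2 : ℕ) (hN : 0 < N) (hp1 : 0 < p1) (hp2 : 0 < p2)
    (W : Matrix (Fin N) (Fin N) ℝ) (hW : ∀ i, W i i = 0)
    (X : Matrix (Fin N) (Fin p1 ⊕ Fin p2) ℝ)
    (ρ0 : ℝ) (β0 : Fin p1 ⊕ Fin p2 → ℝ) (σ02 lam2 lamx2 : ℝ)
    (hσ : 0 < σ02) (hlam : 0 < lam2) (hlamx : 0 < lamx2)
    (hS0 : 0 < (Smat W ρ0).det)
    (E ε : Ωs → Fin N → ℝ) (Ex : Ωs → Fin N → Fin p2 → ℝ)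
    (hindep : iIndepFun (noiseFam E ε Ex) μ)
    (hmom : ∀ z, MemLp (noiseFam E ε Ex z) 4 μ)
    (hmean : ∀ z, ∫ ω, noiseFam E ε Ex z ω ∂μ = 0)
    (hEvar : ∀ i, ∫ ω, (E ω i) ^ 2 ∂μ = σ02)
    (hepsvar : ∀ i, ∫ ω, (ε ω i) ^ 2 ∂μ = lam2)
    (hExvar : ∀ i j, ∫ ω, (Ex ω i j) ^ 2 ∂μ = lamx2) :
    ∀ j : Fin p1 ⊕ Fin p2,
      (∫ ω, deriv (fun ρ => deriv (fun t : ℝ =>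
            nll W lam2 (Xobs X (Ex ω)) (Yobs W ρ0 X β0 (E ω) (ε ω)) ρ
              (β0 + t • (Pi.single j 1 : (Fin p1 ⊕ Fin p2) → ℝ)) σ02) 0) ρ0 ∂μ)
        - (∫ ω, deriv (fun ρ => deriv (fun t : ℝ =>
            nll W lam2 X (Yobs W ρ0 X β0 (E ω) (ε ω)) ρ
              (β0 + t • (Pi.single j 1 : (Fin p1 ⊕ Fin p2) → ℝ)) σ02) 0) ρ0 ∂μ)
        = Sum.elim (fun _ => (0 : ℝ))
            (fun k => lam2 * lamx2 *
              Matrix.trace ((Omat W lam2 ρ0 σ02)⁻¹ * (Omat W lam2 ρ0 σ02)⁻¹ * WSmat W ρ0) *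
              β0 (Sum.inr k)) j :=
  statement_7_general μ N p1 p2 W X ρ0 β0 σ02 lam2 lamx2 hσ hlam E ε Ex hindep hmom hmean hExvar

end PSAR
end

section
/- The bias-corrected variance update of the corrected likelihood algorithm is unbiased at the true parameter: E[‖S0 Y* − X* β0‖²] = N σ0² + λ² tr(S0 S0ᵀ) + N λx² (β02ᵀ β02); equivalently, E[ N⁻¹{‖S0 Y* − X* β0‖² − λ² tr(S0 S0ᵀ)} − λx² β02ᵀ β02 ] = σ0². -/
open MeasureTheory ProbabilityTheory Matrix
open scoped Matrix

namespace PSAR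

/-!
At the true parameter the residual `S0 Y* − X* β0` equals `E + S0 ε − Ex β02`, so each of its
coordinates is a fixed linear combination of the independent centred noise entries. The second
moment of such a combination is the sum of its squared coefficients weighted by the variances;
summing over the `N` coordinates gives `N σ0² + λ² tr(S0 S0ᵀ) + N λx² ‖β02‖²`, and the second
identity is an affine rearrangement of the first.
-/

theorem integral_sq_sum_mul_eq_of_indepFun {Ω ι : Type*} [MeasurableSpace Ω] {μ : Measure Ω}
    [IsFiniteMeasure μ] [Fintype ι] {f : ι → Ω → ℝ}
    (hindep : Pairwise fun i j => f i ⟂ᵢ[μ] f j) (hL2 : ∀ i, MemLp (f i) 2 μ)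
    (hmean : ∀ i, μ[f i] = 0) (c : ι → ℝ) :
    ∫ ω, (∑ i, c i * f i ω) ^ 2 ∂μ = ∑ i, c i ^ 2 * ∫ ω, f i ω ^ 2 ∂μ := by
  have hcf : ∀ i, MemLp (fun ω => c i * f i ω) 2 μ := fun i => (hL2 i).const_mul (c i)
  have hsum_eq : (∑ i, fun ω => c i * f i ω) = fun ω => ∑ i, c i * f i ω := by
    ext ω; simp only [Finset.sum_apply]
  have hsum_mean : μ[fun ω => ∑ i, c i * f i ω] = 0 := by
    rw [integral_finsetSum _ fun i _ => (hcf i).integrable one_le_two]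
    simp [integral_const_mul, hmean]
  calc ∫ ω, (∑ i, c i * f i ω) ^ 2 ∂μ = Var[∑ i, fun ω => c i * f i ω; μ] := by
        rw [hsum_eq, variance_of_integral_eq_zero
          (memLp_finsetSum _ fun i _ => hcf i).aemeasurable hsum_mean]
    _ = ∑ i, Var[fun ω => c i * f i ω; μ] :=
        IndepFun.variance_sum (fun i _ => hcf i) fun i _ j _ hij =>
          (hindep hij).comp (measurable_const_mul (c i)) (measurable_const_mul (c j))
    _ = ∑ i, c i ^ 2 * ∫ ω, f i ω ^ 2 ∂μ := by
        simp only [variance_const_mul, variance_of_integral_eq_zero (hL2 _).aemeasurable (hmean _)]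

theorem trace_mul_transpose_self {n : Type*} [Fintype n] (A : Matrix n n ℝ) :
    (A * Aᵀ).trace = ∑ i, ∑ j, A i j ^ 2 := by
  simp [Matrix.trace, Matrix.mul_apply, sq]

theorem Smat_mulVec_Yobs_sub_Xobs_mulVec {N p1 p2 : ℕ} {W : Matrix (Fin N) (Fin N) ℝ} {ρ0 : ℝ}
    (hS0 : IsUnit (Smat W ρ0).det) (X : Matrix (Fin N) (Fin p1 ⊕ Fin p2) ℝ)
    (β0 : Fin p1 ⊕ Fin p2 → ℝ) (E ε : Fin N → ℝ) (Ex : Fin N → Fin p2 → ℝ) :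
    Smat W ρ0 *ᵥ Yobs W ρ0 X β0 E ε - Xobs X Ex *ᵥ β0
      = E + Smat W ρ0 *ᵥ ε - fun i => ∑ k, Ex i k * β0 (Sum.inr k) := by
  have hEx : (Matrix.of fun i j => Sum.elim (fun _ => (0 : ℝ)) (fun k => Ex i k) j) *ᵥ β0
      = fun i => ∑ k, Ex i k * β0 (Sum.inr k) := by
    ext i; simp [Matrix.mulVec, dotProduct, Fintype.sum_sum_type]
  rw [Yobs, Xobs, Matrix.mulVec_add, Matrix.mulVec_mulVec, Matrix.mul_nonsing_inv _ hS0,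
    Matrix.one_mulVec, Matrix.add_mulVec, hEx]
  abel

/-- Coefficients of `(E + S ε − Ex b)_i` in the noise family `noiseFam E ε Ex`. -/
def residualCoeff {N p2 : ℕ} (S : Matrix (Fin N) (Fin N) ℝ) (b : Fin p2 → ℝ) (i : Fin N) :
    Fin N ⊕ Fin N ⊕ Fin N × Fin p2 → ℝ :=
  Sum.elim (Pi.single i 1) (Sum.elim (S i) fun q => if q.1 = i then -b q.2 else 0)

theorem sum_residualCoeff_mul {Ωs : Type*} {N p2 : ℕ} (S : Matrix (Fin N) (Fin N) ℝ)
    (b : Fin p2 → ℝ) (E ε : Ωs → Fin N → ℝ) (Ex : Ωs → Fin N → Fin p2 → ℝ) (ω : Ωs) (i : Fin N) :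
    ∑ z, residualCoeff S b i z * noiseFam E ε Ex z ω
      = (E ω + S *ᵥ ε ω - fun i => ∑ k, Ex ω i k * b k) i := by
  simp [residualCoeff, noiseFam, Fintype.sum_sum_type, Fintype.sum_prod_type, Matrix.mulVec,
    dotProduct, Pi.single_apply, mul_comm]
  ring

theorem sum_residualCoeff_sq_mul {N p2 : ℕ} (S : Matrix (Fin N) (Fin N) ℝ) (b : Fin p2 → ℝ)
    (i : Fin N) (a l lx : ℝ) :
    ∑ z, residualCoeff S b i z ^ 2 * Sum.elim (fun _ => a) (Sum.elim (fun _ => l) fun _ => lx) z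
      = a + l * ∑ j, S i j ^ 2 + lx * ∑ k, b k ^ 2 := by
  simp [residualCoeff, Fintype.sum_sum_type, Fintype.sum_prod_type, Pi.single_apply,
    apply_ite (· ^ 2), Finset.mul_sum, mul_comm]
  ring

theorem integral_noiseFam_sq {Ωs : Type*} [MeasurableSpace Ωs] {μ : Measure Ωs} {N p2 : ℕ}
    {E ε : Ωs → Fin N → ℝ} {Ex : Ωs → Fin N → Fin p2 → ℝ} {σ02 lam2 lamx2 : ℝ}
    (hEvar : ∀ i, ∫ ω, (E ω i) ^ 2 ∂μ = σ02) (hepsvar : ∀ i, ∫ ω, (ε ω i) ^ 2 ∂μ = lam2)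
    (hExvar : ∀ i j, ∫ ω, (Ex ω i j) ^ 2 ∂μ = lamx2) :
    ∀ z, ∫ ω, noiseFam E ε Ex z ω ^ 2 ∂μ
      = Sum.elim (fun _ => σ02) (Sum.elim (fun _ => lam2) fun _ => lamx2) z
  | .inl i => hEvar i
  | .inr (.inl i) => hepsvar i
  | .inr (.inr q) => hExvar q.1 q.2

theorem integral_residual_dotProduct_self {Ωs : Type*} [MeasurableSpace Ωs] {μ : Measure Ωs}
    [IsFiniteMeasure μ] {N p1 p2 : ℕ} {W : Matrix (Fin N) (Fin N) ℝ} {ρ0 : ℝ}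
    (hS0 : IsUnit (Smat W ρ0).det) (X : Matrix (Fin N) (Fin p1 ⊕ Fin p2) ℝ)
    (β0 : Fin p1 ⊕ Fin p2 → ℝ) {σ02 lam2 lamx2 : ℝ}
    {E ε : Ωs → Fin N → ℝ} {Ex : Ωs → Fin N → Fin p2 → ℝ}
    (hindep : iIndepFun (noiseFam E ε Ex) μ) (hL2 : ∀ z, MemLp (noiseFam E ε Ex z) 2 μ)
    (hmean : ∀ z, ∫ ω, noiseFam E ε Ex z ω ∂μ = 0)
    (hEvar : ∀ i, ∫ ω, (E ω i) ^ 2 ∂μ = σ02) (hepsvar : ∀ i, ∫ ω, (ε ω i) ^ 2 ∂μ = lam2)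
    (hExvar : ∀ i j, ∫ ω, (Ex ω i j) ^ 2 ∂μ = lamx2) :
    Integrable (fun ω => (Smat W ρ0 *ᵥ Yobs W ρ0 X β0 (E ω) (ε ω) - Xobs X (Ex ω) *ᵥ β0) ⬝ᵥ
        (Smat W ρ0 *ᵥ Yobs W ρ0 X β0 (E ω) (ε ω) - Xobs X (Ex ω) *ᵥ β0)) μ ∧
    ∫ ω, (Smat W ρ0 *ᵥ Yobs W ρ0 X β0 (E ω) (ε ω) - Xobs X (Ex ω) *ᵥ β0) ⬝ᵥ
        (Smat W ρ0 *ᵥ Yobs W ρ0 X β0 (E ω) (ε ω) - Xobs X (Ex ω) *ᵥ β0) ∂μ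
      = N * σ02 + lam2 * Matrix.trace (Smat W ρ0 * (Smat W ρ0)ᵀ)
          + N * lamx2 * (∑ k, β0 (Sum.inr k) ^ 2) := by
  set c := residualCoeff (Smat W ρ0) fun k => β0 (Sum.inr k)
  have hresidual : ∀ ω,
      (Smat W ρ0 *ᵥ Yobs W ρ0 X β0 (E ω) (ε ω) - Xobs X (Ex ω) *ᵥ β0) ⬝ᵥ
        (Smat W ρ0 *ᵥ Yobs W ρ0 X β0 (E ω) (ε ω) - Xobs X (Ex ω) *ᵥ β0)
        = ∑ i, (∑ z, c i z * noiseFam E ε Ex z ω) ^ 2 := fun ω => by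
    simp only [Smat_mulVec_Yobs_sub_Xobs_mulVec hS0, dotProduct, sum_residualCoeff_mul, c, sq]
  have hint : ∀ i, Integrable (fun ω => (∑ z, c i z * noiseFam E ε Ex z ω) ^ 2) μ := fun i =>
    (memLp_finsetSum _ fun z _ => (hL2 z).const_mul (c i z)).integrable_sq
  have hrow : ∀ i, ∫ ω, (∑ z, c i z * noiseFam E ε Ex z ω) ^ 2 ∂μ
      = σ02 + lam2 * ∑ j, Smat W ρ0 i j ^ 2 + lamx2 * ∑ k, β0 (Sum.inr k) ^ 2 := fun i => by
    rw [integral_sq_sum_mul_eq_of_indepFun (fun _ _ h => hindep.indepFun h) hL2 hmean]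
    simp only [integral_noiseFam_sq hEvar hepsvar hExvar]
    exact sum_residualCoeff_sq_mul _ _ i _ _ _
  simp_rw [hresidual]
  refine ⟨integrable_finsetSum _ fun i _ => hint i, ?_⟩
  rw [integral_finsetSum _ fun i _ => hint i, Finset.sum_congr rfl fun i _ => hrow i,
    trace_mul_transpose_self, Finset.sum_add_distrib, Finset.sum_add_distrib, ← Finset.mul_sum]
  simp only [Finset.sum_const, Finset.card_univ, Fintype.card_fin, nsmul_eq_mul]
  ring

theorem statement_10_general
    {Ωs : Type*} [MeasurableSpace Ωs] (μ : Measure Ωs) [IsProbabilityMeasure μ]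
    (N p1 p2 : ℕ) (hN : 0 < N)
    (W : Matrix (Fin N) (Fin N) ℝ)
    (X : Matrix (Fin N) (Fin p1 ⊕ Fin p2) ℝ)
    (ρ0 : ℝ) (β0 : Fin p1 ⊕ Fin p2 → ℝ) (σ02 lam2 lamx2 : ℝ)
    (hS0 : 0 < (Smat W ρ0).det)
    (E ε : Ωs → Fin N → ℝ) (Ex : Ωs → Fin N → Fin p2 → ℝ)
    (hindep : iIndepFun (noiseFam E ε Ex) μ)
    (hmom : ∀ z, MemLp (noiseFam E ε Ex z) 4 μ)
    (hmean : ∀ z, ∫ ω, noiseFam E ε Ex z ω ∂μ = 0)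
    (hEvar : ∀ i, ∫ ω, (E ω i) ^ 2 ∂μ = σ02)
    (hepsvar : ∀ i, ∫ ω, (ε ω i) ^ 2 ∂μ = lam2)
    (hExvar : ∀ i j, ∫ ω, (Ex ω i j) ^ 2 ∂μ = lamx2) :
    (∫ ω, (Smat W ρ0 *ᵥ Yobs W ρ0 X β0 (E ω) (ε ω) - Xobs X (Ex ω) *ᵥ β0) ⬝ᵥ
        (Smat W ρ0 *ᵥ Yobs W ρ0 X β0 (E ω) (ε ω) - Xobs X (Ex ω) *ᵥ β0) ∂μ
      = N * σ02 + lam2 * Matrix.trace (Smat W ρ0 * (Smat W ρ0)ᵀ)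
          + N * lamx2 * (∑ k, β0 (Sum.inr k) ^ 2)) ∧
    ∫ ω, ((N : ℝ)⁻¹ *
        ((Smat W ρ0 *ᵥ Yobs W ρ0 X β0 (E ω) (ε ω) - Xobs X (Ex ω) *ᵥ β0) ⬝ᵥ
          (Smat W ρ0 *ᵥ Yobs W ρ0 X β0 (E ω) (ε ω) - Xobs X (Ex ω) *ᵥ β0)
          - lam2 * Matrix.trace (Smat W ρ0 * (Smat W ρ0)ᵀ))
        - lamx2 * (∑ k, β0 (Sum.inr k) ^ 2)) ∂μ = σ02
  := by
  obtain ⟨hint, hmoment⟩ := integral_residual_dotProduct_self hS0.ne'.isUnit X β0 hindep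
    (fun z => (hmom z).mono_exponent (by norm_num)) hmean hEvar hepsvar hExvar
  refine ⟨hmoment, ?_⟩
  rw [integral_sub ?_ (integrable_const _), integral_const_mul,
    integral_sub hint (integrable_const _), hmoment]
  · simp only [integral_const, probReal_univ, one_smul]
    field_simp
    ring
  · exact (hint.sub (integrable_const _)).const_mul _

theorem statement_10
    {Ωs : Type*} [MeasurableSpace Ωs] (μ : Measure Ωs) [IsProbabilityMeasure μ]
    (N p1 p2 : ℕ) (hN : 0 < N) (hp1 : 0 < p1) (hp2 : 0 < p2)
    (W : Matrix (Fin N) (Fin N) ℝ) (hW : ∀ i, W i i = 0)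
    (X : Matrix (Fin N) (Fin p1 ⊕ Fin p2) ℝ)
    (ρ0 : ℝ) (β0 : Fin p1 ⊕ Fin p2 → ℝ) (σ02 lam2 lamx2 : ℝ)
    (hσ : 0 < σ02) (hlam : 0 < lam2) (hlamx : 0 < lamx2)
    (hS0 : 0 < (Smat W ρ0).det)
    (E ε : Ωs → Fin N → ℝ) (Ex : Ωs → Fin N → Fin p2 → ℝ)
    (hindep : iIndepFun (noiseFam E ε Ex) μ)
    (hmom : ∀ z, MemLp (noiseFam E ε Ex z) 4 μ)
    (hmean : ∀ z, ∫ ω, noiseFam E ε Ex z ω ∂μ = 0)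
    (hEvar : ∀ i, ∫ ω, (E ω i) ^ 2 ∂μ = σ02)
    (hepsvar : ∀ i, ∫ ω, (ε ω i) ^ 2 ∂μ = lam2)
    (hExvar : ∀ i j, ∫ ω, (Ex ω i j) ^ 2 ∂μ = lamx2) :
    (∫ ω, (Smat W ρ0 *ᵥ Yobs W ρ0 X β0 (E ω) (ε ω) - Xobs X (Ex ω) *ᵥ β0) ⬝ᵥ
        (Smat W ρ0 *ᵥ Yobs W ρ0 X β0 (E ω) (ε ω) - Xobs X (Ex ω) *ᵥ β0) ∂μ
      = N * σ02 + lam2 * Matrix.trace (Smat W ρ0 * (Smat W ρ0)ᵀ)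
          + N * lamx2 * (∑ k, β0 (Sum.inr k) ^ 2)) ∧
    ∫ ω, ((N : ℝ)⁻¹ *
        ((Smat W ρ0 *ᵥ Yobs W ρ0 X β0 (E ω) (ε ω) - Xobs X (Ex ω) *ᵥ β0) ⬝ᵥ
          (Smat W ρ0 *ᵥ Yobs W ρ0 X β0 (E ω) (ε ω) - Xobs X (Ex ω) *ᵥ β0)
          - lam2 * Matrix.trace (Smat W ρ0 * (Smat W ρ0)ᵀ))
        - lamx2 * (∑ k, β0 (Sum.inr k) ^ 2)) ∂μ = σ02 :=
  statement_10_general μ N p1 p2 hN W X ρ0 β0 σ02 lam2 lamx2 hS0 E ε Ex hindep hmom hmean hEvar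
    hepsvar hExvar

end PSAR
end

section
/- With the true response Y and true covariate matrix X, the gradient of the least squares objective has mean zero at the true parameter: the gradient ∇_γ L_LS(γ) exists at γ0 = (ρ0, β0ᵀ)ᵀ and E[∇_γ L_LS(γ0)] = 0 ∈ ℝ^{p+1}. -/
open MeasureTheory ProbabilityTheory Matrix
open scoped Matrix

namespace PSAR

/-
Write `q(γ) = S(ρ)ᵀ (S(ρ)Y − Xβ)` and `a_i(ρ) = (S(ρ)ᵀ S(ρ))_ii`, so that `L_LS = ∑ᵢ (qᵢ / aᵢ)²`.
Along a line `γ + s v` with `v = (t, b)`, both `q` and `a` are quadratic polynomials in `s`;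
this gives differentiability and the directional derivative
`∑ᵢ 2 (qᵢ / aᵢ) (q'ᵢ aᵢ − qᵢ a'ᵢ) / aᵢ²` with `a'ᵢ = −t 𝕎(ρ)_ii`.
At the true parameter the residual is `E`, so `q = S0ᵀ E`, and `q'` is affine in `E` with linear
part `M = −t (S0ᵀ W S0⁻¹ + Wᵀ)`, where `M S0 = −t 𝕎0`. As `E` has covariance `σ0² I`,
`E[qᵢ²] = σ0² aᵢ` and `E[qᵢ q'ᵢ] = σ0² a'ᵢ`, so every summand has mean zero.
-/

section LineAlgebra

variable {N : ℕ} {W : Matrix (Fin N) (Fin N) ℝ}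

lemma Smat_add (ρ r : ℝ) : Smat W (ρ + r) = Smat W ρ - r • W := by
  simp only [Smat, add_smul]
  abel

lemma transpose_Smat_mul_Smat_add (ρ r : ℝ) :
    (Smat W (ρ + r))ᵀ * Smat W (ρ + r)
      = (Smat W ρ)ᵀ * Smat W ρ - r • WLSmat W ρ + r ^ 2 • (Wᵀ * W) := by
  simp only [Smat_add, WLSmat, transpose_sub, transpose_smul, sub_mul, mul_sub,
    Matrix.smul_mul, Matrix.mul_smul, smul_smul]
  module

lemma transpose_Smat_add_mul_mulVec_sub_smul (ρ r s : ℝ) (u v : Fin N → ℝ) :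
    (Smat W (ρ + s * r))ᵀ *ᵥ (u - s • v)
      = (Smat W ρ)ᵀ *ᵥ u + s • (-((Smat W ρ)ᵀ *ᵥ v) - r • (Wᵀ *ᵥ u))
        + s ^ 2 • (r • (Wᵀ *ᵥ v)) := by
  simp only [Smat_add, transpose_sub, transpose_smul, sub_mulVec, mulVec_sub, smul_mulVec,
    mulVec_smul]
  module

end LineAlgebra

lemma transpose_mul_self_apply_ne_zero {n : Type*} [Fintype n] [DecidableEq n]
    {A : Matrix n n ℝ} (hA : A.det ≠ 0) (i : n) : (Aᵀ * A) i i ≠ 0 := by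
  have hpos := (PosDef.conjTranspose_mul_self A (mulVec_injective_of_det_ne_zero hA)).diag_pos
    (i := i)
  rw [conjTranspose_eq_transpose_of_trivial] at hpos
  exact hpos.ne'

lemma hasDerivAt_quadratic (c₀ c₁ c₂ : ℝ) :
    HasDerivAt (fun s : ℝ => c₀ + s * c₁ + s ^ 2 * c₂) c₁ 0 := by
  simpa using (((hasDerivAt_id (0 : ℝ)).mul_const c₁).const_add c₀).fun_add
    (((hasDerivAt_id (0 : ℝ)).fun_pow 2).mul_const c₂)

lemma hasDerivAt_div_quadratic_sq {q₀ q₁ q₂ a₀ a₁ a₂ : ℝ} (ha : a₀ ≠ 0) :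
    HasDerivAt (fun s : ℝ => ((q₀ + s * q₁ + s ^ 2 * q₂) / (a₀ + s * a₁ + s ^ 2 * a₂)) ^ 2)
      (2 * (q₀ / a₀) * ((q₁ * a₀ - q₀ * a₁) / a₀ ^ 2)) 0 := by
  simpa using ((hasDerivAt_quadratic q₀ q₁ q₂).fun_div (hasDerivAt_quadratic a₀ a₁ a₂)
    (by simpa using ha)).fun_pow 2

section LeastSquaresObjective

variable {N p1 p2 : ℕ} {W : Matrix (Fin N) (Fin N) ℝ}

noncomputable def transposeSmatResid (W : Matrix (Fin N) (Fin N) ℝ)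
    (X : Matrix (Fin N) (Fin p1 ⊕ Fin p2) ℝ) (Y : Fin N → ℝ) (ρ : ℝ)
    (β : Fin p1 ⊕ Fin p2 → ℝ) : Fin N → ℝ :=
  (Smat W ρ)ᵀ *ᵥ (Smat W ρ *ᵥ Y - X *ᵥ β)

noncomputable def transposeSmatResidLineDeriv (W : Matrix (Fin N) (Fin N) ℝ)
    (X : Matrix (Fin N) (Fin p1 ⊕ Fin p2) ℝ) (Y : Fin N → ℝ) (ρ : ℝ)
    (β : Fin p1 ⊕ Fin p2 → ℝ) (v : ℝ × (Fin p1 ⊕ Fin p2 → ℝ)) : Fin N → ℝ :=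
  -((Smat W ρ)ᵀ *ᵥ (v.1 • (W *ᵥ Y) + X *ᵥ v.2)) - v.1 • (Wᵀ *ᵥ (Smat W ρ *ᵥ Y - X *ᵥ β))

lemma lsObj_eq_sum (X : Matrix (Fin N) (Fin p1 ⊕ Fin p2) ℝ) (Y : Fin N → ℝ) (ρ : ℝ)
    (β : Fin p1 ⊕ Fin p2 → ℝ) :
    lsObj W X Y ρ β
      = ∑ i, (transposeSmatResid W X Y ρ β i / ((Smat W ρ)ᵀ * Smat W ρ) i i) ^ 2 := by
  simp only [lsObj, transposeSmatResid, dmat, ← mulVec_mulVec, dotProduct, mulVec_diagonal,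
    div_eq_inv_mul, sq]

lemma differentiableAt_lsObj (X : Matrix (Fin N) (Fin p1 ⊕ Fin p2) ℝ) (Y : Fin N → ℝ) (ρ : ℝ)
    (β : Fin p1 ⊕ Fin p2 → ℝ) (ha : ∀ i, ((Smat W ρ)ᵀ * Smat W ρ) i i ≠ 0) :
    DifferentiableAt ℝ (fun γ : ℝ × (Fin p1 ⊕ Fin p2 → ℝ) => lsObj W X Y γ.1 γ.2) (ρ, β) := by
  simp only [lsObj_eq_sum, transposeSmatResid, Smat, mulVec, dotProduct, mul_apply,
    transpose_apply, Matrix.sub_apply, Pi.sub_apply, Matrix.smul_apply, smul_eq_mul] at ha ⊢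
  fun_prop (disch := exact ha _)

lemma hasLineDerivAt_lsObj (X : Matrix (Fin N) (Fin p1 ⊕ Fin p2) ℝ) (Y : Fin N → ℝ) (ρ : ℝ)
    (β : Fin p1 ⊕ Fin p2 → ℝ) (v : ℝ × (Fin p1 ⊕ Fin p2 → ℝ))
    (ha : ∀ i, ((Smat W ρ)ᵀ * Smat W ρ) i i ≠ 0) :
    HasLineDerivAt ℝ (fun γ : ℝ × (Fin p1 ⊕ Fin p2 → ℝ) => lsObj W X Y γ.1 γ.2)
      (∑ i, 2 * (transposeSmatResid W X Y ρ β i / ((Smat W ρ)ᵀ * Smat W ρ) i i) *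
        ((transposeSmatResidLineDeriv W X Y ρ β v i * ((Smat W ρ)ᵀ * Smat W ρ) i i
          - transposeSmatResid W X Y ρ β i * -(v.1 * WLSmat W ρ i i))
            / ((Smat W ρ)ᵀ * Smat W ρ) i i ^ 2))
      (ρ, β) v := by
  have hresid : ∀ s : ℝ, Smat W (ρ + s * v.1) *ᵥ Y - X *ᵥ (β + s • v.2)
      = (Smat W ρ *ᵥ Y - X *ᵥ β) - s • (v.1 • (W *ᵥ Y) + X *ᵥ v.2) := fun s => by
    simp only [Smat_add, sub_mulVec, mulVec_add, mulVec_smul, smul_mulVec]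
    module
  have hline : ∀ s : ℝ, lsObj W X Y ((ρ, β) + s • v).1 ((ρ, β) + s • v).2
      = ∑ i, ((transposeSmatResid W X Y ρ β i + s * transposeSmatResidLineDeriv W X Y ρ β v i
          + s ^ 2 * (v.1 • (Wᵀ *ᵥ (v.1 • (W *ᵥ Y) + X *ᵥ v.2))) i)
        / (((Smat W ρ)ᵀ * Smat W ρ) i i + s * -(v.1 * WLSmat W ρ i i)
          + s ^ 2 * (v.1 ^ 2 * (Wᵀ * W) i i))) ^ 2 := fun s => by
    simp only [Prod.fst_add, Prod.snd_add, Prod.smul_fst, Prod.smul_snd, smul_eq_mul,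
      lsObj_eq_sum, transposeSmatResid, hresid, transpose_Smat_add_mul_mulVec_sub_smul,
      transpose_Smat_mul_Smat_add]
    refine Finset.sum_congr rfl fun i _ => ?_
    simp only [transposeSmatResidLineDeriv, Pi.add_apply, Pi.smul_apply, Matrix.add_apply,
      Matrix.sub_apply, Matrix.smul_apply, smul_eq_mul]
    ring
  unfold HasLineDerivAt
  simp only [hline]
  exact HasDerivAt.fun_sum fun i _ => hasDerivAt_div_quadratic_sq (ha i)

end LeastSquaresObjective

section Covariance

variable {Ω : Type*} [MeasurableSpace Ω] {μ : Measure Ω} {m n : Type*} {E : Ω → n → ℝ}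
  {σ2 : ℝ}

lemma integral_mul_eq_ite [DecidableEq n] (hE : ∀ k, MemLp (fun ω => E ω k) 2 μ)
    (hmean : ∀ k, ∫ ω, E ω k ∂μ = 0) (hvar : ∀ k, ∫ ω, E ω k ^ 2 ∂μ = σ2)
    (hindep : Pairwise fun k l => IndepFun (fun ω => E ω k) (fun ω => E ω l) μ) (k l : n) :
    ∫ ω, E ω k * E ω l ∂μ = if k = l then σ2 else 0 := by
  split_ifs with hkl
  · simpa [hkl, sq] using hvar l
  · simpa [hmean] using
      (hindep hkl).integral_mul_eq_mul_integral (hE k).aestronglyMeasurable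
        (hE l).aestronglyMeasurable

variable [Fintype n]

lemma memLp_mulVec_apply (hE : ∀ k, MemLp (fun ω => E ω k) 2 μ) (A : Matrix m n ℝ) (i : m) :
    MemLp (fun ω => (A *ᵥ E ω) i) 2 μ := by
  simp only [mulVec, dotProduct]
  exact memLp_finsetSum _ fun k _ => (hE k).const_mul (A i k)

lemma integrable_mulVec_apply_mul_self (hE : ∀ k, MemLp (fun ω => E ω k) 2 μ)
    (A : Matrix m n ℝ) (i : m) : Integrable (fun ω => (A *ᵥ E ω) i * (A *ᵥ E ω) i) μ :=
  (memLp_mulVec_apply hE A i).integrable_mul (memLp_mulVec_apply hE A i)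

variable [IsFiniteMeasure μ]

lemma integrable_mulVec_apply_mul (hE : ∀ k, MemLp (fun ω => E ω k) 2 μ)
    (A B : Matrix m n ℝ) (c : m → ℝ) (i j : m) :
    Integrable (fun ω => (A *ᵥ E ω) i * (B *ᵥ E ω + c) j) μ :=
  (memLp_mulVec_apply hE A i).integrable_mul
    ((memLp_mulVec_apply hE B j).add (memLp_const (c j)))

lemma integral_mulVec_mul_mulVec_add [DecidableEq n] (hE : ∀ k, MemLp (fun ω => E ω k) 2 μ)
    (hmean : ∀ k, ∫ ω, E ω k ∂μ = 0)
    (hcov : ∀ k l, ∫ ω, E ω k * E ω l ∂μ = if k = l then σ2 else 0)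
    (A B : Matrix m n ℝ) (c : m → ℝ) (i j : m) :
    ∫ ω, (A *ᵥ E ω) i * (B *ᵥ E ω + c) j ∂μ = σ2 * (A * Bᵀ) i j := by
  have hprod : ∀ k l, Integrable (fun ω => E ω k * E ω l) μ := fun k l =>
    (hE k).integrable_mul (hE l)
  have hexpand : ∀ ω, (A *ᵥ E ω) i * (B *ᵥ E ω + c) j
      = ∑ k, ((∑ l, A i k * B j l * (E ω k * E ω l)) + A i k * c j * E ω k) := by
    intro ω
    simp only [Pi.add_apply, mulVec, dotProduct, Finset.sum_add_distrib, Finset.sum_mul,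
      mul_add, Finset.mul_sum]
    rw [Finset.sum_comm]
    congr 1
    · exact Finset.sum_congr rfl fun k _ => Finset.sum_congr rfl fun l _ => by ring
    · exact Finset.sum_congr rfl fun k _ => by ring
  have hterm : ∀ k, Integrable
      (fun ω => (∑ l, A i k * B j l * (E ω k * E ω l)) + A i k * c j * E ω k) μ := fun k =>
    (integrable_finsetSum _ fun l _ => (hprod k l).const_mul _).add
      (((hE k).integrable one_le_two).const_mul _)
  simp only [hexpand]
  rw [integral_finsetSum _ fun k _ => hterm k]
  simp only [integral_add (integrable_finsetSum _ fun l _ => (hprod _ l).const_mul _)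
      (((hE _).integrable one_le_two).const_mul _),
    integral_finsetSum _ fun l _ => (hprod _ l).const_mul _, integral_const_mul, hcov, hmean,
    mul_ite, mul_zero, add_zero, Finset.sum_ite_eq, Finset.mem_univ, if_true, mul_apply,
    transpose_apply, Finset.mul_sum]
  exact Finset.sum_congr rfl fun k _ => by ring

lemma two_mul_div_mul_div_sq_eq {a : ℝ} (ha : a ≠ 0) (x y a' : ℝ) :
    2 * (x / a) * ((y * a - x * a') / a ^ 2)
      = 2 / a ^ 2 * (x * y) - 2 * a' / a ^ 3 * (x * x) := by
  field_simp

lemma integrable_two_mul_div_mul_div_sq (hE : ∀ k, MemLp (fun ω => E ω k) 2 μ)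
    (A B : Matrix m n ℝ) (c : m → ℝ) (i : m) {a a' : ℝ} (ha : a ≠ 0) :
    Integrable (fun ω => 2 * ((A *ᵥ E ω) i / a)
      * (((B *ᵥ E ω + c) i * a - (A *ᵥ E ω) i * a') / a ^ 2)) μ := by
  simp only [two_mul_div_mul_div_sq_eq ha]
  exact ((integrable_mulVec_apply_mul hE A B c i i).const_mul _).sub
    ((integrable_mulVec_apply_mul_self hE A i).const_mul _)

lemma integral_two_mul_div_mul_div_sq_eq_zero [DecidableEq n]
    (hE : ∀ k, MemLp (fun ω => E ω k) 2 μ) (hmean : ∀ k, ∫ ω, E ω k ∂μ = 0)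
    (hcov : ∀ k l, ∫ ω, E ω k * E ω l ∂μ = if k = l then σ2 else 0)
    (A B : Matrix m n ℝ) (c : m → ℝ) (i : m) {a a' : ℝ} (ha : a ≠ 0)
    (hA : (A * Aᵀ) i i = a) (hB : (A * Bᵀ) i i = a') :
    ∫ ω, 2 * ((A *ᵥ E ω) i / a)
      * (((B *ᵥ E ω + c) i * a - (A *ᵥ E ω) i * a') / a ^ 2) ∂μ = 0 := by
  have hAA : ∫ ω, (A *ᵥ E ω) i * (A *ᵥ E ω) i ∂μ = σ2 * a := by
    simpa [hA] using integral_mulVec_mul_mulVec_add hE hmean hcov A A 0 i i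
  simp only [two_mul_div_mul_div_sq_eq ha]
  rw [integral_sub ((integrable_mulVec_apply_mul hE A B c i i).const_mul _)
      ((integrable_mulVec_apply_mul_self hE A i).const_mul _),
    integral_const_mul, integral_const_mul, hAA,
    integral_mulVec_mul_mulVec_add hE hmean hcov, hB]
  field_simp
  ring

end Covariance

section TrueParameter

variable {N p1 p2 : ℕ} {W : Matrix (Fin N) (Fin N) ℝ} {ρ0 : ℝ}
  {X : Matrix (Fin N) (Fin p1 ⊕ Fin p2) ℝ} {β0 : Fin p1 ⊕ Fin p2 → ℝ}

noncomputable def lineDerivNoiseMat (W : Matrix (Fin N) (Fin N) ℝ) (ρ t : ℝ) :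
    Matrix (Fin N) (Fin N) ℝ :=
  -(t • ((Smat W ρ)ᵀ * W * (Smat W ρ)⁻¹ + Wᵀ))

lemma Smat_mulVec_Ytrue (hS : (Smat W ρ0).det ≠ 0) (e : Fin N → ℝ) :
    Smat W ρ0 *ᵥ Ytrue W ρ0 X β0 e = X *ᵥ β0 + e := by
  rw [Ytrue, mulVec_mulVec, mul_nonsing_inv _ hS.isUnit, one_mulVec]

lemma transposeSmatResid_Ytrue (hS : (Smat W ρ0).det ≠ 0) (e : Fin N → ℝ) :
    transposeSmatResid W X (Ytrue W ρ0 X β0 e) ρ0 β0 = (Smat W ρ0)ᵀ *ᵥ e := by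
  rw [transposeSmatResid, Smat_mulVec_Ytrue hS, add_sub_cancel_left]

lemma transposeSmatResidLineDeriv_Ytrue (hS : (Smat W ρ0).det ≠ 0) (e : Fin N → ℝ)
    (v : ℝ × (Fin p1 ⊕ Fin p2 → ℝ)) :
    transposeSmatResidLineDeriv W X (Ytrue W ρ0 X β0 e) ρ0 β0 v
      = lineDerivNoiseMat W ρ0 v.1 *ᵥ e
        + (Smat W ρ0)ᵀ *ᵥ -(v.1 • (W *ᵥ ((Smat W ρ0)⁻¹ *ᵥ (X *ᵥ β0))) + X *ᵥ v.2) := by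
  rw [transposeSmatResidLineDeriv, Smat_mulVec_Ytrue hS, add_sub_cancel_left, Ytrue,
    lineDerivNoiseMat]
  simp only [neg_mulVec, mulVec_neg, smul_mulVec, add_mulVec, ← mulVec_mulVec, mulVec_add,
    mulVec_smul]
  module

lemma transpose_Smat_mul_transpose_lineDerivNoiseMat (hS : (Smat W ρ0).det ≠ 0) (t : ℝ) :
    (Smat W ρ0)ᵀ * (lineDerivNoiseMat W ρ0 t)ᵀ = -(t • WLSmat W ρ0) := by
  rw [← transpose_transpose (-(t • WLSmat W ρ0)), ← transpose_mul]
  congr 1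
  rw [lineDerivNoiseMat, WLSmat, Matrix.neg_mul, Matrix.smul_mul, add_mul,
    Matrix.mul_assoc _ (Smat W ρ0)⁻¹, nonsing_inv_mul _ hS.isUnit, Matrix.mul_one,
    transpose_neg, transpose_smul, transpose_add, transpose_mul, transpose_mul,
    transpose_transpose, transpose_transpose, add_comm]

end TrueParameter

theorem statement_11_general
    {Ωs : Type*} [MeasurableSpace Ωs] (μ : Measure Ωs) [IsProbabilityMeasure μ]
    (N p1 p2 : ℕ)
    (W : Matrix (Fin N) (Fin N) ℝ)
    (X : Matrix (Fin N) (Fin p1 ⊕ Fin p2) ℝ)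
    (ρ0 : ℝ) (β0 : Fin p1 ⊕ Fin p2 → ℝ) (σ02 : ℝ)
    (hS0 : 0 < (Smat W ρ0).det)
    (E ε : Ωs → Fin N → ℝ) (Ex : Ωs → Fin N → Fin p2 → ℝ)
    (hindep : iIndepFun (noiseFam E ε Ex) μ)
    (hmom : ∀ z, MemLp (noiseFam E ε Ex z) 4 μ)
    (hmean : ∀ z, ∫ ω, noiseFam E ε Ex z ω ∂μ = 0)
    (hEvar : ∀ i, ∫ ω, (E ω i) ^ 2 ∂μ = σ02) :
    (∀ ω, DifferentiableAt ℝ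
        (fun γ : ℝ × ((Fin p1 ⊕ Fin p2) → ℝ) =>
          lsObj W X (Ytrue W ρ0 X β0 (E ω)) γ.1 γ.2) (ρ0, β0)) ∧
      ∀ v : ℝ × ((Fin p1 ⊕ Fin p2) → ℝ),
        ∫ ω, fderiv ℝ
            (fun γ : ℝ × ((Fin p1 ⊕ Fin p2) → ℝ) =>
              lsObj W X (Ytrue W ρ0 X β0 (E ω)) γ.1 γ.2) (ρ0, β0) v ∂μ = 0
  := by
  have hdet : (Smat W ρ0).det ≠ 0 := hS0.ne'
  have ha := transpose_mul_self_apply_ne_zero hdet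
  have hdiff : ∀ ω, DifferentiableAt ℝ
      (fun γ : ℝ × ((Fin p1 ⊕ Fin p2) → ℝ) => lsObj W X (Ytrue W ρ0 X β0 (E ω)) γ.1 γ.2)
      (ρ0, β0) := fun ω => differentiableAt_lsObj X _ ρ0 β0 ha
  refine ⟨hdiff, fun v => ?_⟩
  have hE : ∀ k, MemLp (fun ω => E ω k) 2 μ := fun k =>
    (hmom (Sum.inl k)).mono_exponent (by norm_num)
  have hEmean : ∀ k, ∫ ω, E ω k ∂μ = 0 := fun k => hmean (Sum.inl k)
  have hcov := integral_mul_eq_ite hE hEmean hEvar fun k l hkl =>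
    hindep.indepFun (Sum.inl_injective.ne hkl)
  simp only [← (hdiff _).lineDeriv_eq_fderiv, (hasLineDerivAt_lsObj X _ ρ0 β0 v ha).lineDeriv,
    transposeSmatResid_Ytrue hdet, transposeSmatResidLineDeriv_Ytrue hdet]
  rw [integral_finsetSum _ fun i _ => integrable_two_mul_div_mul_div_sq hE _ _ _ i (ha i)]
  refine Finset.sum_eq_zero fun i _ =>
    integral_two_mul_div_mul_div_sq_eq_zero hE hEmean hcov _ _ _ i (ha i) ?_ ?_
  · rw [transpose_transpose]
  · rw [transpose_Smat_mul_transpose_lineDerivNoiseMat hdet, Matrix.neg_apply,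
      Matrix.smul_apply, smul_eq_mul]

theorem statement_11
    {Ωs : Type*} [MeasurableSpace Ωs] (μ : Measure Ωs) [IsProbabilityMeasure μ]
    (N p1 p2 : ℕ) (hN : 0 < N) (hp1 : 0 < p1) (hp2 : 0 < p2)
    (W : Matrix (Fin N) (Fin N) ℝ) (hW : ∀ i, W i i = 0)
    (X : Matrix (Fin N) (Fin p1 ⊕ Fin p2) ℝ)
    (ρ0 : ℝ) (β0 : Fin p1 ⊕ Fin p2 → ℝ) (σ02 lam2 lamx2 : ℝ)
    (hσ : 0 < σ02) (hlam : 0 < lam2) (hlamx : 0 < lamx2)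
    (hS0 : 0 < (Smat W ρ0).det)
    (E ε : Ωs → Fin N → ℝ) (Ex : Ωs → Fin N → Fin p2 → ℝ)
    (hindep : iIndepFun (noiseFam E ε Ex) μ)
    (hmom : ∀ z, MemLp (noiseFam E ε Ex z) 4 μ)
    (hmean : ∀ z, ∫ ω, noiseFam E ε Ex z ω ∂μ = 0)
    (hEvar : ∀ i, ∫ ω, (E ω i) ^ 2 ∂μ = σ02)
    (hepsvar : ∀ i, ∫ ω, (ε ω i) ^ 2 ∂μ = lam2)
    (hExvar : ∀ i j, ∫ ω, (Ex ω i j) ^ 2 ∂μ = lamx2) :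
    (∀ ω, DifferentiableAt ℝ
        (fun γ : ℝ × ((Fin p1 ⊕ Fin p2) → ℝ) =>
          lsObj W X (Ytrue W ρ0 X β0 (E ω)) γ.1 γ.2) (ρ0, β0)) ∧
      ∀ v : ℝ × ((Fin p1 ⊕ Fin p2) → ℝ),
        ∫ ω, fderiv ℝ
            (fun γ : ℝ × ((Fin p1 ⊕ Fin p2) → ℝ) =>
              lsObj W X (Ytrue W ρ0 X β0 (E ω)) γ.1 γ.2) (ρ0, β0) v ∂μ = 0 :=
  statement_11_general μ N p1 p2 W X ρ0 β0 σ02 hS0 E ε Ex hindep hmom hmean hEvar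

end PSAR
end

section
/- The difference of expected β-Hessians of the noisy- and true-data least squares objectives at the true parameter is the explicit block-diagonal matrix: E[∂²L*_LS/∂β∂βᵀ (γ0)] − E[∂²L_LS/∂β∂βᵀ (γ0)] = blockdiag(0_{p1×p1}, 2λx² tr(S0 d0² S0ᵀ) I_{p2}). -/
open MeasureTheory ProbabilityTheory Matrix
open scoped Matrix

namespace PSAR

/-! The least-squares objective is a quadratic function of `β`, so its `β`-Hessian is the
constant `2 Xᵀ G X` with `G = S₀ d₀² S₀ᵀ`, whatever the response; only the covariate noise
matters. Writing `X* = X + Z` with `Z = (0, Ex)` centred, the cross terms of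
`(X + Z)ᵀ G (X + Z)` vanish in expectation and, by independence of the entries of `Ex`,
`E[(Zᵀ G Z)ⱼₖ] = ∑ᵣ Gᵣᵣ E[Zᵣⱼ Zᵣₖ] = λₓ² tr G δⱼₖ` on the second block and `0` elsewhere. -/

section Hessian

variable {n : Type*} [Fintype n]

theorem deriv_dotProduct_self_sub_smul (q b : n → ℝ) :
    deriv (fun u : ℝ => (q - u • b) ⬝ᵥ (q - u • b)) 0 = -(2 * (q ⬝ᵥ b)) := by
  have hexp : (fun u : ℝ => (q - u • b) ⬝ᵥ (q - u • b))
      = fun u => q ⬝ᵥ q - 2 * (q ⬝ᵥ b) * u + (b ⬝ᵥ b) * u ^ 2 := by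
    funext u
    simp only [dotProduct_sub, sub_dotProduct, dotProduct_smul, smul_dotProduct, smul_eq_mul,
      dotProduct_comm b q]
    ring
  have hderiv := (((hasDerivAt_id (0 : ℝ)).const_mul (2 * (q ⬝ᵥ b))).const_sub (q ⬝ᵥ q)).add
    ((hasDerivAt_pow 2 (0 : ℝ)).const_mul (b ⬝ᵥ b))
  rw [hexp]
  exact hderiv.deriv.trans (by simp)

theorem deriv_deriv_dotProduct_self_sub_smul (q a b : n → ℝ) :
    deriv (fun t : ℝ => deriv (fun u : ℝ => (q - t • a - u • b) ⬝ᵥ (q - t • a - u • b)) 0) 0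
      = 2 * (a ⬝ᵥ b) := by
  simp only [deriv_dotProduct_self_sub_smul]
  simp only [sub_dotProduct, smul_dotProduct, smul_eq_mul]
  have hderiv := ((((hasDerivAt_id (0 : ℝ)).mul_const (a ⬝ᵥ b)).const_sub (q ⬝ᵥ b)).const_mul 2).neg
  exact hderiv.deriv.trans (by simp)

end Hessian

theorem mulVec_col_dotProduct_mulVec_col {m n ι : Type*} [Fintype m] [Fintype n]
    (A : Matrix m n ℝ) (X : Matrix n ι ℝ) (j k : ι) :
    (A *ᵥ X.col j) ⬝ᵥ (A *ᵥ X.col k) = (Xᵀ * (Aᵀ * A) * X) j k := by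
  have h : Xᵀ * (Aᵀ * A) * X = (A * X)ᵀ * (A * X) := by
    simp only [transpose_mul, Matrix.mul_assoc]
  rw [h]
  rfl

theorem transpose_mul_mul_apply {n ι : Type*} [Fintype n] (A B : Matrix n ι ℝ)
    (G : Matrix n n ℝ) (j k : ι) :
    (Aᵀ * G * B) j k = ∑ r, ∑ s, G r s * (A r j * B s k) := by
  simp only [mul_apply, transpose_apply, Finset.sum_mul]
  rw [Finset.sum_comm]
  exact Finset.sum_congr rfl fun r _ => Finset.sum_congr rfl fun s _ => by ring

section LeastSquares

variable {N p1 p2 : ℕ} (W : Matrix (Fin N) (Fin N) ℝ) (X : Matrix (Fin N) (Fin p1 ⊕ Fin p2) ℝ)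
  (Y : Fin N → ℝ) (ρ : ℝ) (β : Fin p1 ⊕ Fin p2 → ℝ) (j k : Fin p1 ⊕ Fin p2)

theorem dmat_transpose : (dmat W ρ)ᵀ = dmat W ρ :=
  diagonal_transpose _

theorem lsObj_add_smul_single_add_smul_single (t u : ℝ) :
    lsObj W X Y ρ (β + t • Pi.single j 1 + u • Pi.single k 1)
      = let A := dmat W ρ * (Smat W ρ)ᵀ
        let q := A *ᵥ (Smat W ρ *ᵥ Y - X *ᵥ β)
        (q - t • (A *ᵥ X.col j) - u • (A *ᵥ X.col k)) ⬝ᵥ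
          (q - t • (A *ᵥ X.col j) - u • (A *ᵥ X.col k)) := by
  simp only [lsObj, mulVec_add, mulVec_smul, mulVec_single_one, mulVec_sub, sub_add_eq_sub_sub]

theorem deriv_deriv_lsObj :
    deriv (fun t : ℝ => deriv (fun u : ℝ =>
        lsObj W X Y ρ (β + t • Pi.single j 1 + u • Pi.single k 1)) 0) 0
      = 2 * (Xᵀ * (Smat W ρ * (dmat W ρ * dmat W ρ) * (Smat W ρ)ᵀ) * X) j k := by
  simp only [lsObj_add_smul_single_add_smul_single, deriv_deriv_dotProduct_self_sub_smul,
    mulVec_col_dotProduct_mulVec_col, transpose_mul, transpose_transpose, dmat_transpose,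
    Matrix.mul_assoc]

end LeastSquares

section Moments

variable {Ω : Type*} {mΩ : MeasurableSpace Ω} {μ : Measure Ω}

theorem integral_mul_eq_zero_of_iIndepFun_s14 {ι : Type*} {f : ι → Ω → ℝ} (hf : iIndepFun f μ)
    (hmeas : ∀ i, AEStronglyMeasurable (f i) μ) (hmean : ∀ i, ∫ ω, f i ω ∂μ = 0) {i j : ι}
    (hij : i ≠ j) : ∫ ω, f i ω * f j ω ∂μ = 0 := by
  rw [(hf.indepFun hij).integral_fun_mul_eq_mul_integral (hmeas i) (hmeas j), hmean i, zero_mul]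

variable [IsProbabilityMeasure μ]

theorem integral_add_mul_add {U V : Ω → ℝ} (a b : ℝ) (hU : MemLp U 2 μ) (hV : MemLp V 2 μ)
    (hU0 : ∫ ω, U ω ∂μ = 0) (hV0 : ∫ ω, V ω ∂μ = 0) :
    ∫ ω, (a + U ω) * (b + V ω) ∂μ = a * b + ∫ ω, U ω * V ω ∂μ := by
  have hUV : Integrable (fun ω => U ω * V ω) μ := hU.integrable_mul hV
  have hexp : (fun ω => (a + U ω) * (b + V ω))
      = fun ω => (a * b + (b * U ω + a * V ω)) + U ω * V ω := by
    funext ω; ring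
  have hU1 := (hU.integrable one_le_two).const_mul b
  have hV1 := (hV.integrable one_le_two).const_mul a
  rw [hexp, integral_add ((integrable_const _).fun_add (hU1.fun_add hV1)) hUV,
    integral_add (integrable_const _) (hU1.fun_add hV1), integral_add hU1 hV1,
    integral_const_mul b U, integral_const_mul a V, hU0, hV0]
  simp

theorem integral_transpose_add_mul_mul_add_apply {n ι : Type*} [Fintype n] (G : Matrix n n ℝ)
    (X : Matrix n ι ℝ) (Z : Ω → Matrix n ι ℝ) (hZ : ∀ r j, MemLp (fun ω => Z ω r j) 2 μ)
    (hZ0 : ∀ r j, ∫ ω, Z ω r j ∂μ = 0) (j k : ι) :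
    ∫ ω, ((X + Z ω)ᵀ * G * (X + Z ω)) j k ∂μ
      = (Xᵀ * G * X) j k + ∑ r, ∑ s, G r s * ∫ ω, Z ω r j * Z ω s k ∂μ := by
  have hint : ∀ r s, Integrable (fun ω => (X r j + Z ω r j) * (X s k + Z ω s k)) μ :=
    fun r s => (((memLp_const (X r j)).add (hZ r j)).integrable_mul
      ((memLp_const (X s k)).add (hZ s k)) :)
  have hterm : ∀ r s, ∫ ω, G r s * ((X r j + Z ω r j) * (X s k + Z ω s k)) ∂μ
      = G r s * (X r j * X s k) + G r s * ∫ ω, Z ω r j * Z ω s k ∂μ := fun r s => by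
    rw [integral_const_mul, integral_add_mul_add _ _ (hZ r j) (hZ s k) (hZ0 r j) (hZ0 s k),
      mul_add]
  simp only [transpose_mul_mul_apply, Matrix.add_apply]
  rw [integral_finsetSum _ fun r _ =>
    integrable_finsetSum _ fun s _ => (hint r s).const_mul (G r s)]
  simp only [integral_finsetSum _ fun s _ => (hint _ s).const_mul (G _ s), hterm,
    Finset.sum_add_distrib]

end Moments

theorem Xobs_eq_add_fromCols {N p1 p2 : ℕ} (X : Matrix (Fin N) (Fin p1 ⊕ Fin p2) ℝ)
    (Ex : Fin N → Fin p2 → ℝ) : Xobs X Ex = X + fromCols 0 (of Ex) := by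
  ext i (j | j) <;> rfl

section MeasurementError

variable {Ω : Type*} [MeasurableSpace Ω] {μ : Measure Ω} {N p1 p2 : ℕ}
  {E ε : Ω → Fin N → ℝ} {Ex : Ω → Fin N → Fin p2 → ℝ}

theorem memLp_fromCols_zero_noise [IsFiniteMeasure μ]
    (hmom : ∀ z, MemLp (noiseFam E ε Ex z) 4 μ) (r : Fin N) (j : Fin p1 ⊕ Fin p2) :
    MemLp (fun ω => fromCols (0 : Matrix (Fin N) (Fin p1) ℝ) (of (Ex ω)) r j) 2 μ := by
  rcases j with j | j
  · simp
  · exact (hmom (.inr (.inr (r, j)))).mono_exponent (by norm_num)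

theorem integral_fromCols_zero_noise (hmean : ∀ z, ∫ ω, noiseFam E ε Ex z ω ∂μ = 0)
    (r : Fin N) (j : Fin p1 ⊕ Fin p2) :
    ∫ ω, fromCols (0 : Matrix (Fin N) (Fin p1) ℝ) (of (Ex ω)) r j ∂μ = 0 := by
  rcases j with j | j
  · simp
  · exact hmean (.inr (.inr (r, j)))

theorem integral_fromCols_zero_noise_mul {lamx2 : ℝ} (hindep : iIndepFun (noiseFam E ε Ex) μ)
    (hmom : ∀ z, MemLp (noiseFam E ε Ex z) 4 μ)
    (hmean : ∀ z, ∫ ω, noiseFam E ε Ex z ω ∂μ = 0)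
    (hExvar : ∀ i j, ∫ ω, (Ex ω i j) ^ 2 ∂μ = lamx2) (r s : Fin N) (j k : Fin p1 ⊕ Fin p2) :
    ∫ ω, fromCols (0 : Matrix (Fin N) (Fin p1) ℝ) (of (Ex ω)) r j *
        fromCols (0 : Matrix (Fin N) (Fin p1) ℝ) (of (Ex ω)) s k ∂μ
      = if r = s then lamx2 * (fromBlocks 0 0 0 1 : Matrix (Fin p1 ⊕ Fin p2) _ ℝ) j k else 0 := by
  rcases j with j | j <;> rcases k with k | k
  · simp
  · simp
  · simp
  by_cases h : r = s ∧ j = k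
  · obtain ⟨rfl, rfl⟩ := h
    simp [← pow_two, hExvar]
  · have hne : (.inr (.inr (r, j)) : Fin N ⊕ Fin N ⊕ Fin N × Fin p2) ≠ .inr (.inr (s, k)) := by
      simpa using h
    refine (integral_mul_eq_zero_of_iIndepFun_s14 hindep (fun z => (hmom z).aestronglyMeasurable)
      hmean hne).trans ?_
    split_ifs with hrs
    · simp_all [one_apply]
    · rfl

end MeasurementError

theorem statement_14_general
    {Ωs : Type*} [MeasurableSpace Ωs] (μ : Measure Ωs) [IsProbabilityMeasure μ]
    (N p1 p2 : ℕ)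
    (W : Matrix (Fin N) (Fin N) ℝ)
    (X : Matrix (Fin N) (Fin p1 ⊕ Fin p2) ℝ)
    (ρ0 : ℝ) (β0 : Fin p1 ⊕ Fin p2 → ℝ) (lamx2 : ℝ)
    (E ε : Ωs → Fin N → ℝ) (Ex : Ωs → Fin N → Fin p2 → ℝ)
    (hindep : iIndepFun (noiseFam E ε Ex) μ)
    (hmom : ∀ z, MemLp (noiseFam E ε Ex z) 4 μ)
    (hmean : ∀ z, ∫ ω, noiseFam E ε Ex z ω ∂μ = 0)
    (hExvar : ∀ i j, ∫ ω, (Ex ω i j) ^ 2 ∂μ = lamx2) :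
    ∀ j k : Fin p1 ⊕ Fin p2,
      (∫ ω, deriv (fun t : ℝ => deriv (fun u : ℝ =>
            lsObj W (Xobs X (Ex ω)) (Yobs W ρ0 X β0 (E ω) (ε ω)) ρ0
              (β0 + t • (Pi.single j 1 : (Fin p1 ⊕ Fin p2) → ℝ) + u • (Pi.single k 1 : (Fin p1 ⊕ Fin p2) → ℝ))) 0) 0 ∂μ)
        - (∫ ω, deriv (fun t : ℝ => deriv (fun u : ℝ =>
            lsObj W X (Ytrue W ρ0 X β0 (E ω)) ρ0
              (β0 + t • (Pi.single j 1 : (Fin p1 ⊕ Fin p2) → ℝ) + u • (Pi.single k 1 : (Fin p1 ⊕ Fin p2) → ℝ))) 0) 0 ∂μ)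
        = (Matrix.fromBlocks 0 0 0
            ((2 * lamx2 *
              Matrix.trace (Smat W ρ0 * (dmat W ρ0 * dmat W ρ0) * (Smat W ρ0)ᵀ)) •
              (1 : Matrix (Fin p2) (Fin p2) ℝ)) :
            Matrix (Fin p1 ⊕ Fin p2) (Fin p1 ⊕ Fin p2) ℝ) j k
  := by
  intro j k
  simp only [deriv_deriv_lsObj, Xobs_eq_add_fromCols, integral_const_mul, integral_const,
    probReal_univ, one_smul]
  rw [integral_transpose_add_mul_mul_add_apply _ X _ (memLp_fromCols_zero_noise hmom)
    (integral_fromCols_zero_noise hmean)]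
  simp only [integral_fromCols_zero_noise_mul hindep hmom hmean hExvar, mul_ite, mul_zero,
    Finset.sum_ite_eq, Finset.mem_univ, if_true]
  rw [mul_add, add_sub_cancel_left, ← Finset.sum_mul]
  rcases j with j | j <;> rcases k with k | k <;> simp [trace, one_apply]
  split_ifs <;> ring

theorem statement_14
    {Ωs : Type*} [MeasurableSpace Ωs] (μ : Measure Ωs) [IsProbabilityMeasure μ]
    (N p1 p2 : ℕ) (hN : 0 < N) (hp1 : 0 < p1) (hp2 : 0 < p2)
    (W : Matrix (Fin N) (Fin N) ℝ) (hW : ∀ i, W i i = 0)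
    (X : Matrix (Fin N) (Fin p1 ⊕ Fin p2) ℝ)
    (ρ0 : ℝ) (β0 : Fin p1 ⊕ Fin p2 → ℝ) (σ02 lam2 lamx2 : ℝ)
    (hσ : 0 < σ02) (hlam : 0 < lam2) (hlamx : 0 < lamx2)
    (hS0 : 0 < (Smat W ρ0).det)
    (E ε : Ωs → Fin N → ℝ) (Ex : Ωs → Fin N → Fin p2 → ℝ)
    (hindep : iIndepFun (noiseFam E ε Ex) μ)
    (hmom : ∀ z, MemLp (noiseFam E ε Ex z) 4 μ)
    (hmean : ∀ z, ∫ ω, noiseFam E ε Ex z ω ∂μ = 0)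
    (hEvar : ∀ i, ∫ ω, (E ω i) ^ 2 ∂μ = σ02)
    (hepsvar : ∀ i, ∫ ω, (ε ω i) ^ 2 ∂μ = lam2)
    (hExvar : ∀ i j, ∫ ω, (Ex ω i j) ^ 2 ∂μ = lamx2) :
    ∀ j k : Fin p1 ⊕ Fin p2,
      (∫ ω, deriv (fun t : ℝ => deriv (fun u : ℝ =>
            lsObj W (Xobs X (Ex ω)) (Yobs W ρ0 X β0 (E ω) (ε ω)) ρ0
              (β0 + t • (Pi.single j 1 : (Fin p1 ⊕ Fin p2) → ℝ) + u • (Pi.single k 1 : (Fin p1 ⊕ Fin p2) → ℝ))) 0) 0 ∂μ)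
        - (∫ ω, deriv (fun t : ℝ => deriv (fun u : ℝ =>
            lsObj W X (Ytrue W ρ0 X β0 (E ω)) ρ0
              (β0 + t • (Pi.single j 1 : (Fin p1 ⊕ Fin p2) → ℝ) + u • (Pi.single k 1 : (Fin p1 ⊕ Fin p2) → ℝ))) 0) 0 ∂μ)
        = (Matrix.fromBlocks 0 0 0
            ((2 * lamx2 *
              Matrix.trace (Smat W ρ0 * (dmat W ρ0 * dmat W ρ0) * (Smat W ρ0)ᵀ)) •
              (1 : Matrix (Fin p2) (Fin p2) ℝ)) :
            Matrix (Fin p1 ⊕ Fin p2) (Fin p1 ⊕ Fin p2) ℝ) j k :=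
  statement_14_general μ N p1 p2 W X ρ0 β0 lamx2 E ε Ex hindep hmom hmean hExvar

end PSAR
end
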